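/- arXiv:cs/0404055 — 4 statements merged into one kernel-verified Lean document; each statement's English description precedes it below -/
import Mathlib

section
/- Let σ ∈ VSubst and let x ↦ t be a binding. Then for every τ ∈ mgs(σ ∪ {x = t}): hvars(σ) ∖ {y ∈ Vars | vars(rt(y, σ)) ∩ (vars(rt(x, σ)) ∪ vars(rt(t, σ))) ≠ ∅} ⊆ hvars(τ); that is, after unifying x with t, term-finiteness is preserved for all variables independent from both x and t. -/
/-!  Common infrastructure: finite and rational trees, substitutions in
rational solved form, the theory RT of rational trees, finiteness /
groundness operators, and Boolean functions over a set of variables of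
interest. -/

/-- A signature: a type of function symbols with fixed arities. -/
structure Signature where
  Sym : Type
  arity : Sym → ℕ

/-- Finite terms over a signature, with variables drawn from `ℕ`. -/
inductive HTerm (Sg : Signature) : Type where
  | var : ℕ → HTerm Sg
  | app : (f : Sg.Sym) → (Fin (Sg.arity f) → HTerm Sg) → HTerm Sg

namespace HTerm

variable {Sg : Signature}

/-- The set of variables occurring in a finite term. -/
def varsIn : HTerm Sg → Set ℕ
  | .var x => {x}
  | .app _ ts => ⋃ i, (ts i).varsIn

/-- Homomorphic application of a variable assignment to a finite term. -/
def substRaw (m : ℕ → HTerm Sg) : HTerm Sg → HTerm Sg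
  | .var x => m x
  | .app f ts => .app f (fun i => (ts i).substRaw m)

/-- The label of the node of a finite term at a given path
(`none` if there is no node at that path). -/
def labelAt : HTerm Sg → List ℕ → Option (Sg.Sym ⊕ ℕ)
  | .var x, [] => some (Sum.inr x)
  | .app f _, [] => some (Sum.inl f)
  | .var _, _ :: _ => none
  | .app f ts, i :: p => if h : i < Sg.arity f then (ts ⟨i, h⟩).labelAt p else none

end HTerm

/-- Substitutions: maps from variables to finite terms that are the identity
on all but finitely many variables. -/
structure Subst (Sg : Signature) where
  map : ℕ → HTerm Sg
  finite : {x : ℕ | map x ≠ HTerm.var x}.Finite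

namespace Subst

variable {Sg : Signature}

/-- The domain of a substitution. -/
def dom (σ : Subst Sg) : Set ℕ := {x | σ.map x ≠ HTerm.var x}

/-- Application of a substitution to a finite term. -/
def apply (σ : Subst Sg) (t : HTerm Sg) : HTerm Sg := t.substRaw σ.map

/-- `σ.iter i t` is `t σ^i`, the `i`-fold application of `σ` to `t`. -/
def iter (σ : Subst Sg) (i : ℕ) (t : HTerm Sg) : HTerm Sg := σ.apply^[i] t

/-- The set of variables occurring in the bindings of `σ`. -/
def varsOf (σ : Subst Sg) : Set ℕ := σ.dom ∪ ⋃ x ∈ σ.dom, (σ.map x).varsIn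

/-- The number of bindings of `σ`. -/
noncomputable def numBindings (σ : Subst Sg) : ℕ := σ.finite.toFinset.card

/-- The set of bindings of `σ`, as pairs (variable, term). -/
def bindings (σ : Subst Sg) : Set (ℕ × HTerm Sg) :=
  {p | p.1 ∈ σ.dom ∧ p.2 = σ.map p.1}

end Subst

/-- A set of bindings forms a circular substitution
`{x₁ ↦ x₂, …, x_{n-1} ↦ x_n, x_n ↦ x₁}` for some `n > 1` and
distinct variables `x₁, …, x_n`. -/
def IsCircularBindingSet {Sg : Signature} (S : Set (ℕ × HTerm Sg)) : Prop :=
  ∃ n : ℕ, 1 < n ∧ ∃ x : ℕ → ℕ,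
    (∀ i j, i < n → j < n → x i = x j → i = j) ∧
    S = {p | ∃ i < n, p = (x i, HTerm.var (x ((i + 1) % n)))}

/-- `σ` is in rational solved form: no subset of its bindings forms a
circular substitution.  `RSubst` is the set of such substitutions. -/
def Subst.InRSF {Sg : Signature} (σ : Subst Sg) : Prop :=
  ∀ S ⊆ σ.bindings, ¬ IsCircularBindingSet S

/-- Variable-idempotent substitutions:
`vars(tσσ) = vars(tσ)` for every finite term `t`. -/
def Subst.IsVSubst {Sg : Signature} (σ : Subst Sg) : Prop :=
  σ.InRSF ∧ ∀ t : HTerm Sg, (σ.apply (σ.apply t)).varsIn = (σ.apply t).varsIn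

/-- The finiteness functions `hvars_n`. -/
def Subst.hvarsN {Sg : Signature} (σ : Subst Sg) : ℕ → Set ℕ
  | 0 => {y | y ∉ σ.dom}
  | n + 1 => σ.hvarsN n ∪ {y | y ∈ σ.dom ∧ (σ.map y).varsIn ⊆ σ.hvarsN n}

/-- The finiteness operator `hvars` (the increasing chain `hvars_n` is
stationary, so its union equals its stationary value). -/
def Subst.hvars {Sg : Signature} (σ : Subst Sg) : Set ℕ := ⋃ n, σ.hvarsN n

/-- The occurrence functions `occ_n`. -/
def Subst.occN {Sg : Signature} (σ : Subst Sg) : ℕ → ℕ → Set ℕ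
  | 0, v => {v} \ σ.dom
  | n + 1, v => {y | ((σ.map y).varsIn ∩ σ.occN n v).Nonempty}

/-- The occurrence operator `occ`. -/
noncomputable def Subst.occ {Sg : Signature} (σ : Subst Sg) (v : ℕ) : Set ℕ :=
  σ.occN σ.numBindings v

/-- The groundness operator `gvars`. -/
noncomputable def Subst.gvars {Sg : Signature} (σ : Subst Sg) : Set ℕ :=
  {y | y ∈ σ.dom ∧ ∀ v ∈ σ.varsOf, y ∉ σ.occ v}

/-! Possibly infinite terms, represented by their labeling functions
(partial maps from finite paths to labels; a label is either a function
symbol or a variable). -/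

/-- The set of variables occurring in a possibly infinite term. -/
def treeVars {Sg : Signature} (u : List ℕ → Option (Sg.Sym ⊕ ℕ)) : Set ℕ :=
  {x | ∃ p, u p = some (Sum.inr x)}

/-- A possibly infinite term is finite (a member of `HTerms`) iff its set of
nodes is finite. -/
def treeFinite {Sg : Signature} (u : List ℕ → Option (Sg.Sym ⊕ ℕ)) : Prop :=
  {p | (u p).isSome}.Finite

/-- A possibly infinite term is linear iff each variable labels at most one
of its leaves. -/
def treeLinear {Sg : Signature} (u : List ℕ → Option (Sg.Sym ⊕ ℕ)) : Prop :=
  ∀ (y : ℕ) (p q : List ℕ),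
    u p = some (Sum.inr y) → u q = some (Sum.inr y) → p = q

/-- A variable `y` occurs linearly in a possibly infinite term iff it labels
exactly one of its leaves. -/
def occursLinearlyIn {Sg : Signature} (y : ℕ)
    (u : List ℕ → Option (Sg.Sym ⊕ ℕ)) : Prop :=
  ∃! p : List ℕ, u p = some (Sum.inr y)

/-- A possibly infinite term is a variable. -/
def treeIsVar {Sg : Signature} (u : List ℕ → Option (Sg.Sym ⊕ ℕ)) : Prop :=
  ∃ y : ℕ, u = (HTerm.var y : HTerm Sg).labelAt

/- `σ.rt t` is the limit of the converging sequence `t σ^i` of finite terms: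
its label at each path is the eventual (stable) label of the terms `t σ^i`
at that path. -/
open Classical in
noncomputable def Subst.rt {Sg : Signature} (σ : Subst Sg) (t : HTerm Sg) :
    List ℕ → Option (Sg.Sym ⊕ ℕ) := fun p =>
  if h : ∃ v : Option (Sg.Sym ⊕ ℕ), ∃ N : ℕ, ∀ i ≥ N, (σ.iter i t).labelAt p = v
  then h.choose else none

/-! The theory RT of rational trees, semantically. -/

/-- A first-order structure for the signature `Sg`. -/
structure Struc (Sg : Signature) where
  carrier : Type
  interp : (f : Sg.Sym) → (Fin (Sg.arity f) → carrier) → carrier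

/-- Evaluation of a finite term in a structure under a valuation. -/
def HTerm.eval {Sg : Signature} (A : Struc Sg) (v : ℕ → A.carrier) :
    HTerm Sg → A.carrier
  | .var x => v x
  | .app f ts => A.interp f (fun i => (ts i).eval A v)

/-- Sets of equations between finite terms. -/
abbrev EqSet (Sg : Signature) := Set (HTerm Sg × HTerm Sg)

/-- A valuation satisfies a set of equations (read as their conjunction). -/
def Struc.Sat {Sg : Signature} (A : Struc Sg) (v : ℕ → A.carrier)
    (E : EqSet Sg) : Prop :=
  ∀ e ∈ E, e.1.eval A v = e.2.eval A v

/-- A substitution read as the set of equations `x = σ(x)`, `x ∈ dom σ`. -/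
def Subst.eqs {Sg : Signature} (σ : Subst Sg) : EqSet Sg :=
  {e | ∃ x ∈ σ.dom, e = (HTerm.var x, σ.map x)}

/-- The variables occurring in a set of equations. -/
def eqsVars {Sg : Signature} (E : EqSet Sg) : Set ℕ :=
  ⋃ e ∈ E, (e.1.varsIn ∪ e.2.varsIn)

/-- A model of the theory RT of rational trees: a structure satisfying the
identity axioms (injectivity of each function symbol and distinctness of the
ranges of distinct function symbols) and, for each substitution in rational
solved form, the corresponding uniqueness axiom. -/
structure RTModel (Sg : Signature) where
  struc : Struc Sg
  inj : ∀ (f : Sg.Sym) (a b : Fin (Sg.arity f) → struc.carrier),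
    struc.interp f a = struc.interp f b → a = b
  distinct : ∀ (f g : Sg.Sym) (a : Fin (Sg.arity f) → struc.carrier)
    (b : Fin (Sg.arity g) → struc.carrier), f ≠ g → struc.interp f a ≠ struc.interp g b
  uniqueness : ∀ σ : Subst Sg, σ.InRSF → ∀ v : ℕ → struc.carrier,
    ∃! w : ℕ → struc.carrier,
      (∀ x ∉ σ.dom, w x = v x) ∧ struc.Sat w σ.eqs

/-- `RT ⊢ ∀(E → F)`. -/
def RTImp {Sg : Signature} (E F : EqSet Sg) : Prop :=
  ∀ (A : RTModel Sg) (v : ℕ → A.struc.carrier), A.struc.Sat v E → A.struc.Sat v F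

/-- `RT ⊢ ∀(E ↔ F)`. -/
def RTEquiv {Sg : Signature} (E F : EqSet Sg) : Prop :=
  ∀ (A : RTModel Sg) (v : ℕ → A.struc.carrier), A.struc.Sat v E ↔ A.struc.Sat v F

/-- The set of relevant most general solutions of a set of equations in RT. -/
def mgsRT {Sg : Signature} (E : EqSet Sg) : Set (Subst Sg) :=
  {σ | σ.InRSF ∧ RTEquiv σ.eqs E ∧ σ.varsOf ⊆ eqsVars E}

/-- `↓σ`: the substitutions obtainable as most general solutions of `σ`
together with some further set of equations in rational solved form. -/
def downRT {Sg : Signature} (σ : Subst Sg) : Set (Subst Sg) :=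
  {τ | ∃ σ' : Subst Sg, σ'.InRSF ∧ τ ∈ mgsRT (σ.eqs ∪ σ'.eqs)}

/-- Two valuations agree outside a set `W` of variables. -/
def agreesOff {α : Type _} (W : Set ℕ) (v w : ℕ → α) : Prop :=
  ∀ x ∉ W, v x = w x

/-- `RT ⊢ ∀(∃W.E ↔ ∃W.F)`. -/
def RTExistsEquiv {Sg : Signature} (W : Set ℕ) (E F : EqSet Sg) : Prop :=
  ∀ (A : RTModel Sg) (v : ℕ → A.struc.carrier),
    (∃ w, agreesOff W w v ∧ A.struc.Sat w E) ↔
    (∃ w, agreesOff W w v ∧ A.struc.Sat w F)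

/-- `∃∃x.{σ}` relative to the set `VI` of the variables of interest:
the substitutions `σ'` in rational solved form with
`RT ⊢ ∀(∃ (Vars ∖ VI) . (σ' ↔ ∃x.σ))`. -/
def projExists {Sg : Signature} (VI : Set ℕ) (x : ℕ) (σ : Subst Sg) :
    Set (Subst Sg) :=
  {σ' | σ'.InRSF ∧ ∀ (A : RTModel Sg) (v : ℕ → A.struc.carrier),
    ∃ w, agreesOff VIᶜ w v ∧
      (A.struc.Sat w σ'.eqs ↔ ∃ u, agreesOff {x} u w ∧ A.struc.Sat u σ.eqs)}

/-- `∃∃x.Σ` for a set `Σ` of substitutions. -/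
def projExistsSet {Sg : Signature} (VI : Set ℕ) (x : ℕ) (S : Set (Subst Sg)) :
    Set (Subst Sg) := ⋃ σ ∈ S, projExists VI x σ

/-! Boolean valuations and Boolean functions over the variables of
interest (semantically: only the values on `VI` matter). -/

abbrev BVal := ℕ → Prop
abbrev BFun := BVal → Prop

/-- Entailment `φ ⊨ ψ` of Boolean functions. -/
def BFun.Entails (φ ψ : BFun) : Prop := ∀ a, φ a → ψ a

/-- The Boolean function of a variable. -/
def bVar (x : ℕ) : BFun := fun a => a x

def bAnd (φ ψ : BFun) : BFun := fun a => φ a ∧ ψ a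
def bOr (φ ψ : BFun) : BFun := fun a => φ a ∨ ψ a
def bNot (φ : BFun) : BFun := fun a => ¬ φ a
def bIff (φ ψ : BFun) : BFun := fun a => φ a ↔ ψ a

/-- `⋀S`: the conjunction of the variables in `S` (`⊤` if `S = ∅`). -/
def bConj (S : Set ℕ) : BFun := fun a => ∀ x ∈ S, a x

/-- `∃x.φ = φ[1/x] ∨ φ[0/x]` (Schröder's elimination principle). -/
def bExists (x : ℕ) (φ : BFun) : BFun :=
  fun a => φ (Function.update a x True) ∨ φ (Function.update a x False)

/-- `∃S.φ`: elimination of all the variables of `S`. -/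
def bExistsSet (S : Set ℕ) (φ : BFun) : BFun :=
  fun a => ∃ b : BVal, (∀ x ∉ S, b x = a x) ∧ φ b

/-- `true(φ)`: the variables of `VI` necessarily true for `φ`. -/
def trueVars (VI : Set ℕ) (φ : BFun) : Set ℕ := {x ∈ VI | ∀ a, φ a → a x}

/-- `false(φ)`: the variables of `VI` necessarily false for `φ`. -/
def falseVars (VI : Set ℕ) (φ : BFun) : Set ℕ := {x ∈ VI | ∀ a, φ a → ¬ a x}

/-- `φ ∈ Pos`: `φ` is true under the everything-is-true assignment. -/
def IsPos (φ : BFun) : Prop := φ (fun _ => True)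

/-- `pos(φ) = φ ∨ ⋀VI`. -/
def bPos (VI : Set ℕ) (φ : BFun) : BFun := bOr φ (bConj VI)

/-- `hval(σ)`: the valuation assigning true exactly to the variables of
`hvars(σ)`. -/
def Subst.hval {Sg : Signature} (σ : Subst Sg) : BVal := fun x => x ∈ σ.hvars

/-- `gval(σ)`: the valuation assigning true exactly to the variables of
`gvars(σ)`. -/
noncomputable def Subst.gval {Sg : Signature} (σ : Subst Sg) : BVal :=
  fun x => x ∈ σ.gvars

/-- `γ_H(h)`. -/
def gammaH {Sg : Signature} (h : Set ℕ) : Set (Subst Sg) :=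
  {σ | σ.InRSF ∧ h ⊆ σ.hvars}

/-- `γ_FD(φ)`. -/
def gammaFD {Sg : Signature} (φ : BFun) : Set (Subst Sg) :=
  {σ | σ.InRSF ∧ ∀ τ ∈ downRT σ, φ τ.hval}

/-- `γ_GD(ψ)`. -/
noncomputable def gammaGD {Sg : Signature} (ψ : BFun) : Set (Subst Sg) :=
  {σ | σ.InRSF ∧ ∀ τ ∈ downRT σ, ψ τ.gval}

/-- The substitution consisting of the single binding `x ↦ t`. -/
def singleSubst {Sg : Signature} (x : ℕ) (t : HTerm Sg) : Subst Sg where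
  map := fun y => if y = x then t else HTerm.var y
  finite := Set.Finite.subset (Set.finite_singleton x) (fun y hy => by
    by_contra hxy
    rw [Set.mem_singleton_iff] at hxy
    simp only [Set.mem_setOf_eq] at hy
    exact hy (if_neg hxy))

namespace AMGU

open HTerm

variable {Sg : Signature}

abbrev Tr (Sg : Signature) := List ℕ → Option (Sg.Sym ⊕ ℕ)

lemma varsIn_finite (s : HTerm Sg) : s.varsIn.Finite := by
  induction s with
  | var x => exact Set.finite_singleton x
  | app f ts ih => exact Set.finite_iUnion ih

lemma mem_varsIn_iff {s : HTerm Sg} {z : ℕ} :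
    z ∈ s.varsIn ↔ ∃ p, s.labelAt p = some (Sum.inr z) := by
  induction s with
  | var x =>
    simp only [varsIn, Set.mem_singleton_iff]
    constructor
    · rintro rfl; exact ⟨[], rfl⟩
    · rintro ⟨p, hp⟩
      cases p with
      | nil => simpa [labelAt, eq_comm] using hp
      | cons a q => simp [labelAt] at hp
  | app f ts ih =>
    simp only [varsIn, Set.mem_iUnion]
    constructor
    · rintro ⟨i, hi⟩
      obtain ⟨p, hp⟩ := (ih i).1 hi
      exact ⟨i.val :: p, by simp [labelAt, i.isLt, Fin.eta, hp]⟩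
    · rintro ⟨p, hp⟩
      cases p with
      | nil => simp [labelAt] at hp
      | cons a q =>
        simp only [labelAt] at hp
        split at hp
        · exact ⟨_, (ih _).2 ⟨q, hp⟩⟩
        · simp at hp

lemma varsIn_substRaw {m : ℕ → HTerm Sg} {s : HTerm Sg} :
    (s.substRaw m).varsIn = ⋃ z ∈ s.varsIn, (m z).varsIn := by
  induction s with
  | var x => simp [substRaw, varsIn]
  | app f ts ih =>
    simp only [substRaw, varsIn]
    ext z
    simp only [Set.mem_iUnion]
    constructor
    · rintro ⟨i, hi⟩
      rw [ih i] at hi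
      simp only [Set.mem_iUnion] at hi
      obtain ⟨z', hz', hm⟩ := hi
      exact ⟨z', ⟨i, hz'⟩, hm⟩
    · rintro ⟨z', ⟨i, hz'⟩, hm⟩
      refine ⟨i, ?_⟩
      rw [ih i]
      simp only [Set.mem_iUnion]
      exact ⟨z', hz', hm⟩

lemma substRaw_eq_self {m : ℕ → HTerm Sg} {s : HTerm Sg}
    (h : ∀ z ∈ s.varsIn, m z = .var z) : s.substRaw m = s := by
  induction s with
  | var x => exact h x rfl
  | app f ts ih =>
    simp only [substRaw]
    congr 1
    funext i
    exact ih i (fun z hz => h z (Set.mem_iUnion.2 ⟨i, hz⟩))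

end AMGU
namespace AMGU
variable {Sg : Signature} {σ : Subst Sg}

lemma not_mem_dom_iff {z : ℕ} : z ∉ σ.dom ↔ σ.map z = .var z := by
  simp [Subst.dom]

lemma apply_var (z : ℕ) : σ.apply (.var z) = σ.map z := rfl

lemma apply_app (f : Sg.Sym) (ts : Fin (Sg.arity f) → HTerm Sg) :
    σ.apply (.app f ts) = .app f (fun i => σ.apply (ts i)) := rfl

lemma iter_zero (s : HTerm Sg) : σ.iter 0 s = s := rfl

lemma iter_succ (i : ℕ) (s : HTerm Sg) :
    σ.iter (i + 1) s = σ.iter i (σ.apply s) := Function.iterate_succ_apply _ _ _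

lemma iter_succ' (i : ℕ) (s : HTerm Sg) :
    σ.iter (i + 1) s = σ.apply (σ.iter i s) := Function.iterate_succ_apply' _ _ _

lemma iter_app (i : ℕ) (f : Sg.Sym) (ts : Fin (Sg.arity f) → HTerm Sg) :
    σ.iter i (.app f ts) = .app f (fun j => σ.iter i (ts j)) := by
  induction i with
  | zero => rfl
  | succ i ih =>
    rw [iter_succ', ih, apply_app]
    congr 1
    funext j
    rw [iter_succ']

lemma labelAt_apply_stable {s : HTerm Sg} {p : List ℕ} {l : Sg.Sym ⊕ ℕ}
    (h : s.labelAt p = some l) (hl : ∀ z, l = Sum.inr z → σ.map z = .var z) :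
    (σ.apply s).labelAt p = some l := by
  induction s generalizing p with
  | var z =>
    cases p with
    | nil =>
      simp only [HTerm.labelAt] at h
      obtain rfl : Sum.inr z = l := by injection h
      rw [apply_var, hl z rfl]
      rfl
    | cons a q => simp [HTerm.labelAt] at h
  | app f ts ih =>
    cases p with
    | nil =>
      rw [apply_app]
      simpa [HTerm.labelAt] using h
    | cons a q =>
      rw [apply_app]
      simp only [HTerm.labelAt] at h ⊢
      split at h
      · rw [dif_pos ‹a < Sg.arity f›]
        exact ih _ h
      · exact absurd h (by simp)

lemma labelAt_iter_stable {s : HTerm Sg} {p : List ℕ} {l : Sg.Sym ⊕ ℕ}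
    (h : s.labelAt p = some l) (hl : ∀ z, l = Sum.inr z → σ.map z = .var z)
    (i : ℕ) : (σ.iter i s).labelAt p = some l := by
  induction i with
  | zero => exact h
  | succ i ih => rw [iter_succ']; exact labelAt_apply_stable ih hl

lemma rt_eq_of_stable {s : HTerm Sg} {p : List ℕ} {v : Option (Sg.Sym ⊕ ℕ)} {N : ℕ}
    (h : ∀ i ≥ N, (σ.iter i s).labelAt p = v) : σ.rt s p = v := by
  have hex : ∃ v' : Option (Sg.Sym ⊕ ℕ), ∃ N' : ℕ, ∀ i ≥ N', (σ.iter i s).labelAt p = v' :=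
    ⟨v, N, h⟩
  rw [Subst.rt, dif_pos hex]
  obtain ⟨N', h'⟩ := hex.choose_spec
  have h1 := h (max N N') (le_max_left _ _)
  have h2 := h' (max N N') (le_max_right _ _)
  rw [h1] at h2
  exact h2.symm

lemma rt_stable_of_eq {s : HTerm Sg} {p : List ℕ} {l : Sg.Sym ⊕ ℕ}
    (h : σ.rt s p = some l) : ∃ N, ∀ i ≥ N, (σ.iter i s).labelAt p = some l := by
  rw [Subst.rt] at h
  split at h
  · next hex =>
    obtain ⟨N', h'⟩ := hex.choose_spec
    exact ⟨N', fun i hi => by rw [h' i hi, h]⟩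
  · exact absurd h (by simp)

lemma rt_apply (s : HTerm Sg) : σ.rt (σ.apply s) = σ.rt s := by
  funext p
  by_cases hex : ∃ v : Option (Sg.Sym ⊕ ℕ), ∃ N : ℕ, ∀ i ≥ N, (σ.iter i s).labelAt p = v
  · obtain ⟨v, N, h⟩ := hex
    rw [rt_eq_of_stable h, rt_eq_of_stable (v := v) (N := N)
      (fun i hi => by rw [← iter_succ]; exact h (i+1) (le_trans hi (Nat.le_succ i)))]
  · have hex2 : ¬ ∃ v : Option (Sg.Sym ⊕ ℕ), ∃ N : ℕ,
        ∀ i ≥ N, (σ.iter i (σ.apply s)).labelAt p = v := by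
      rintro ⟨v, N, h⟩
      exact hex ⟨v, N + 1, fun i hi => by
        obtain ⟨j, rfl⟩ : ∃ j, i = j + 1 := ⟨i - 1, by omega⟩
        rw [iter_succ]
        exact h j (by omega)⟩
    simp only [Subst.rt]
    rw [dif_neg hex2, dif_neg hex]

lemma rt_iter (k : ℕ) (s : HTerm Sg) : σ.rt (σ.iter k s) = σ.rt s := by
  induction k with
  | zero => rfl
  | succ k ih => rw [iter_succ', rt_apply, ih]

lemma treeVars_rt_app_sub (f : Sg.Sym) (ts : Fin (Sg.arity f) → HTerm Sg) (j : Fin (Sg.arity f)) :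
    treeVars (σ.rt (ts j)) ⊆ treeVars (σ.rt (.app f ts)) := by
  rintro z ⟨p, hp⟩
  obtain ⟨N, hN⟩ := rt_stable_of_eq hp
  refine ⟨j.val :: p, rt_eq_of_stable (N := N) (fun i hi => ?_)⟩
  rw [iter_app]
  simp only [HTerm.labelAt, j.isLt, dif_pos, Fin.eta]
  exact hN i hi

lemma mem_treeVars_rt_self {z : ℕ} (hz : σ.map z = .var z) :
    z ∈ treeVars (σ.rt (.var z)) := by
  refine ⟨[], rt_eq_of_stable (N := 0) (fun i _ => ?_)⟩
  refine labelAt_iter_stable (by rfl) (fun z' h => ?_) i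
  obtain rfl : z = z' := by simpa using h
  exact hz

lemma mem_treeVars_rt_of_fixed {s : HTerm Sg} {z : ℕ}
    (hnd : ∀ z' ∈ s.varsIn, σ.map z' = .var z') (hz : z ∈ s.varsIn) :
    z ∈ treeVars (σ.rt s) := by
  obtain ⟨p, hp⟩ := mem_varsIn_iff.1 hz
  refine ⟨p, rt_eq_of_stable (N := 0) (fun i _ =>
    labelAt_iter_stable hp (fun z' h => ?_) i)⟩
  obtain rfl : z = z' := by simpa using h
  exact hnd z hz

end AMGU
namespace AMGU
variable {Sg : Signature} {σ : Subst Sg}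

lemma no_var_cycle (hσ : σ.InRSF) (g : ℕ → ℕ)
    (hdom : ∀ i, σ.map (g i) ≠ .var (g i))
    (hstep : ∀ i, σ.map (g i) = .var (g (i + 1))) : False := by
  classical
  have hdet : ∀ a b, g a = g b → ∀ k, g (a + k) = g (b + k) := by
    intro a b hab k
    induction k with
    | zero => simpa using hab
    | succ k ih =>
      have h1 := hstep (a + k)
      have h2 := hstep (b + k)
      rw [ih] at h1
      rw [h1] at h2
      exact HTerm.var.inj h2
  -- pigeonhole
  have hrange : Set.Finite (Set.range g) :=
    σ.finite.subset (by rintro _ ⟨i, rfl⟩; exact hdom i)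
  have hninj : ¬ Function.Injective g := fun hinj =>
    (Set.infinite_range_of_injective hinj) hrange
  rw [Function.not_injective_iff] at hninj
  obtain ⟨a', b', hab', hne⟩ := hninj
  -- wlog a < b
  obtain ⟨a, b, hlt, hab⟩ : ∃ a b, a < b ∧ g a = g b := by
    rcases Nat.lt_or_ge a' b' with h | h
    · exact ⟨a', b', h, hab'⟩
    · exact ⟨b', a', lt_of_le_of_ne h (Ne.symm hne), hab'.symm⟩
  have hP : ∃ n, 0 < n ∧ g (a + n) = g a := ⟨b - a, by omega, by
    have : a + (b - a) = b := by omega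
    rw [this, hab]⟩
  obtain ⟨n, hn⟩ : ∃ n, n = Nat.find hP := ⟨_, rfl⟩
  have hnpos : 0 < n := hn ▸ (Nat.find_spec hP).1
  have hgn : g (a + n) = g a := by rw [hn]; exact (Nat.find_spec hP).2
  have hmin : ∀ m, m < n → ¬(0 < m ∧ g (a + m) = g a) := fun m hm => by
    rw [hn] at hm
    exact Nat.find_min hP hm
  have hn2 : 1 < n := by
    rcases Nat.lt_or_ge 1 n with h | h
    · exact h
    · exfalso
      have : n = 1 := by omega
      rw [this] at hgn
      exact hdom a (by rw [hstep a, hgn])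
  have hdist : ∀ i j, i < n → j < n → g (a + i) = g (a + j) → i = j := by
    intro i j hi hj hij
    by_contra hne'
    obtain ⟨i, j, hij2, hij3, hij'⟩ : ∃ i' j', i' < j' ∧ j' < n ∧ g (a + i') = g (a + j') := by
      rcases Nat.lt_or_ge i j with h | h
      · exact ⟨i, j, h, hj, hij⟩
      · exact ⟨j, i, by omega, hi, hij.symm⟩
    have := hdet (a + i) (a + j) hij' (n - j)
    have hcontra : g (a + (i + (n - j))) = g a := by
      have h1 : a + j + (n - j) = a + n := by omega
      have h2 : a + i + (n - j) = a + (i + (n - j)) := by omega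
      rw [h1, hgn] at this
      rw [← h2]
      exact this
    exact hmin (i + (n - j)) (by omega) ⟨by omega, hcontra⟩
  -- build circular subset
  set S : Set (ℕ × HTerm Sg) :=
    {p | ∃ i < n, p = (g (a + i), HTerm.var (g (a + (i + 1) % n)))} with hS
  have hsub : S ⊆ σ.bindings := by
    rintro ⟨w, s⟩ ⟨i, hi, heq⟩
    obtain ⟨rfl, rfl⟩ := Prod.mk.inj heq
    refine ⟨hdom (a + i), ?_⟩
    show HTerm.var (g (a + (i + 1) % n)) = σ.map (g (a + i))
    rw [hstep (a + i)]
    rcases Nat.lt_or_ge (i + 1) n with h | h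
    · rw [Nat.mod_eq_of_lt h]
      rfl
    · have hin : i + 1 = n := by omega
      rw [hin, Nat.mod_self]
      congr 1
      have h2 : a + i + 1 = a + n := by omega
      rw [Nat.add_zero, h2]
      exact hgn.symm
  exact hσ S hsub ⟨n, hn2, fun i => g (a + i), hdist, rfl⟩

def Rvar (σ : Subst Sg) (z' z : ℕ) : Prop :=
  σ.map z = .var z' ∧ σ.map z ≠ .var z

lemma wf_Rvar (hσ : σ.InRSF) : WellFounded (Rvar σ) := by
  classical
  by_contra hwf
  have hex : ∃ z, ¬ Acc (Rvar σ) z := by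
    by_contra h
    push_neg at h
    exact hwf ⟨h⟩
  obtain ⟨z0, hz0⟩ := hex
  have step : ∀ z, ¬ Acc (Rvar σ) z → ∃ z', Rvar σ z' z ∧ ¬ Acc (Rvar σ) z' := by
    intro z hz
    by_contra h
    push_neg at h
    exact hz (Acc.intro z fun z' hz' => h z' hz')
  let F : {z // ¬ Acc (Rvar σ) z} → {z // ¬ Acc (Rvar σ) z} :=
    fun w => ⟨(step w.1 w.2).choose, (step w.1 w.2).choose_spec.2⟩
  let g : ℕ → {z // ¬ Acc (Rvar σ) z} := fun i => F^[i] ⟨z0, hz0⟩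
  have hg : ∀ i, Rvar σ (g (i + 1)).1 (g i).1 := by
    intro i
    have : g (i + 1) = F (g i) := Function.iterate_succ_apply' F i _
    rw [this]
    exact (step (g i).1 (g i).2).choose_spec.1
  exact no_var_cycle hσ (fun i => (g i).1) (fun i => (hg i).2) (fun i => (hg i).1)

open Classical in
noncomputable def rank (hwf : WellFounded (Rvar σ)) : ℕ → ℕ :=
  hwf.fix (fun z ih => if h : ∃ z', Rvar σ z' z then ih h.choose h.choose_spec + 1 else 1)

open Classical in
lemma rank_eq (hwf : WellFounded (Rvar σ)) (z : ℕ) :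
    rank hwf z = if h : ∃ z', Rvar σ z' z then rank hwf h.choose + 1 else 1 := by
  rw [rank, WellFounded.fix_eq]

open Classical in
lemma rank_pos (hwf : WellFounded (Rvar σ)) (z : ℕ) : 0 < rank hwf z := by
  rw [rank_eq]
  split <;> omega

open Classical in
lemma rank_lt (hwf : WellFounded (Rvar σ)) {z' z : ℕ} (h : Rvar σ z' z) :
    rank hwf z' < rank hwf z := by
  have hex : ∃ w, Rvar σ w z := ⟨z', h⟩
  have hch : hex.choose = z' := by
    have := hex.choose_spec.1
    rw [h.1] at this
    exact (HTerm.var.inj this).symm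
  rw [rank_eq hwf z, dif_pos hex, hch]
  omega

noncomputable def rankT (hwf : WellFounded (Rvar σ)) : HTerm Sg → ℕ
  | .var z => rank hwf z
  | .app _ _ => 0

open Classical in
noncomputable def G (σ : Subst Sg) (hwf : WellFounded (Rvar σ)) (u : ℕ → Tr Sg) :
    HTerm Sg → List ℕ → Option (Sg.Sym ⊕ ℕ)
  | .var z, p =>
    if h : σ.map z = .var z then u z p else G σ hwf u (σ.map z) p
  | .app f _, [] => some (Sum.inl f)
  | .app f ts, i :: p =>
    if h : i < Sg.arity f then G σ hwf u (ts ⟨i, h⟩) p else none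
  termination_by s p => (p.length, rankT hwf s)
  decreasing_by
  · apply Prod.Lex.right
    show rankT hwf (σ.map z) < rankT hwf (.var z)
    cases hm : σ.map z with
    | var z' =>
      show rank hwf z' < rank hwf z
      exact rank_lt hwf ⟨hm, h⟩
    | app f ts =>
      show 0 < rank hwf z
      exact rank_pos hwf z
  · apply Prod.Lex.left
    simp

end AMGU
namespace AMGU
variable {Sg : Signature} {σ : Subst Sg}

open Classical in
lemma G_var (hwf : WellFounded (Rvar σ)) (u : ℕ → Tr Sg) (z : ℕ) (p : List ℕ) :
    G σ hwf u (.var z) p =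
      if σ.map z = .var z then u z p else G σ hwf u (σ.map z) p := by
  rw [G]
  split <;> rfl

lemma G_app_nil (hwf : WellFounded (Rvar σ)) (u : ℕ → Tr Sg) (f : Sg.Sym)
    (ts : Fin (Sg.arity f) → HTerm Sg) :
    G σ hwf u (.app f ts) [] = some (Sum.inl f) := by
  rw [G]

lemma G_app_cons (hwf : WellFounded (Rvar σ)) (u : ℕ → Tr Sg) (f : Sg.Sym)
    (ts : Fin (Sg.arity f) → HTerm Sg) (i : ℕ) (p : List ℕ) :
    G σ hwf u (.app f ts) (i :: p) =
      if h : i < Sg.arity f then G σ hwf u (ts ⟨i, h⟩) p else none := by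
  rw [G]

end AMGU
namespace AMGU
variable {Sg : Signature} {σ : Subst Sg}

def interpM (Sg : Signature) (f : Sg.Sym) (a : Fin (Sg.arity f) → Tr Sg) : Tr Sg :=
  fun p => match p with
  | [] => some (Sum.inl f)
  | i :: q => if h : i < Sg.arity f then a ⟨i, h⟩ q else none

def strucM (Sg : Signature) : Struc Sg := ⟨Tr Sg, interpM Sg⟩

lemma eval_var (v : ℕ → Tr Sg) (z : ℕ) :
    (HTerm.var z).eval (strucM Sg) v = v z := rfl

lemma eval_app (v : ℕ → Tr Sg) (f : Sg.Sym) (ts : Fin (Sg.arity f) → HTerm Sg) :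
    (HTerm.app f ts).eval (strucM Sg) v = interpM Sg f (fun i => (ts i).eval (strucM Sg) v) := rfl

noncomputable def solveS (σ : Subst Sg) (hwf : WellFounded (Rvar σ)) (u : ℕ → Tr Sg) :
    ℕ → Tr Sg := fun z => G σ hwf u (.var z)

lemma G_eq_eval (hwf : WellFounded (Rvar σ)) (u : ℕ → Tr Sg) (s : HTerm Sg) :
    G σ hwf u s = s.eval (strucM Sg) (solveS σ hwf u) := by
  induction s with
  | var z => rfl
  | app f ts ih =>
    funext p
    cases p with
    | nil => rw [G_app_nil]; rfl
    | cons i q =>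
      rw [G_app_cons, eval_app]
      show _ = if h : i < Sg.arity f then ((ts ⟨i, h⟩).eval (strucM Sg) (solveS σ hwf u)) q else none
      split
      · rw [ih]
      · rfl

lemma solveS_nondom (hwf : WellFounded (Rvar σ)) (u : ℕ → Tr Sg) {z : ℕ}
    (h : σ.map z = .var z) : solveS σ hwf u z = u z := by
  funext p
  rw [solveS, G_var, if_pos h]

lemma solveS_sat (hwf : WellFounded (Rvar σ)) (u : ℕ → Tr Sg) :
    (strucM Sg).Sat (solveS σ hwf u) σ.eqs := by
  rintro e ⟨z, hz, rfl⟩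
  show (HTerm.var z).eval (strucM Sg) _ = (σ.map z).eval (strucM Sg) _
  rw [eval_var]
  funext p
  rw [← G_eq_eval]
  show G σ hwf u (.var z) p = _
  rw [G_var, if_neg hz]

lemma solveS_unique (hwf : WellFounded (Rvar σ)) (u : ℕ → Tr Sg) (w : ℕ → Tr Sg)
    (hw : (strucM Sg).Sat w σ.eqs) (hb : ∀ z, σ.map z = .var z → w z = u z) :
    w = solveS σ hwf u := by
  have hwz : ∀ z, σ.map z ≠ .var z → w z = (σ.map z).eval (strucM Sg) w := by
    intro z hz
    exact hw (HTerm.var z, σ.map z) ⟨z, hz, rfl⟩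
  -- Φ n: components agree on paths shorter than n
  suffices hΦ : ∀ n, ∀ z p, p.length < n → w z p = G σ hwf u (.var z) p by
    funext z p
    exact hΦ (p.length + 1) z p (Nat.lt_succ_self _)
  have key : ∀ n, (∀ z p, p.length < n → w z p = G σ hwf u (.var z) p) →
      ∀ s p, p.length < n → s.eval (strucM Sg) w p = G σ hwf u s p := by
    intro n hΦ s
    induction s with
    | var z => exact fun p hp => hΦ z p hp
    | app f ts ih =>
      intro p hp
      cases p with
      | nil => rw [G_app_nil]; rfl
      | cons i q =>
        rw [G_app_cons, eval_app]
        show (if h : i < Sg.arity f then ((ts ⟨i, h⟩).eval (strucM Sg) w) q else none) = _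
        split
        · exact ih _ q (by simpa using Nat.lt_of_succ_lt hp)
        · rfl
  intro n
  induction n with
  | zero => exact fun z p hp => absurd hp (by omega)
  | succ n ihn =>
    intro z
    induction z using hwf.induction with
    | _ z ihz =>
      intro p hp
      by_cases hz : σ.map z = .var z
      · rw [G_var, if_pos hz, hb z hz]
      · rw [G_var, if_neg hz, hwz z hz]
        cases hm : σ.map z with
        | var z' =>
          rw [eval_var]
          exact ihz z' ⟨hm, hz⟩ p hp
        | app f ts =>
          cases p with
          | nil => rw [G_app_nil]; rfl
          | cons i q =>
            rw [G_app_cons, eval_app]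
            show (if h : i < Sg.arity f then ((ts ⟨i, h⟩).eval (strucM Sg) w) q else none) = _
            split
            · exact key n ihn _ q (Nat.lt_of_succ_lt_succ (by simpa using hp))
            · rfl

end AMGU
namespace AMGU
variable {Sg : Signature} {σ : Subst Sg}

noncomputable def modelM (Sg : Signature) : RTModel Sg where
  struc := strucM Sg
  inj := by
    intro f a b h
    funext i p
    have h' : interpM Sg f a = interpM Sg f b := h
    have h2 : interpM Sg f a (i.val :: p) = interpM Sg f b (i.val :: p) := congrFun h' _
    simpa [interpM, i.isLt, Fin.eta] using h2
  distinct := by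
    intro f g a b hfg h
    have h' : interpM Sg f a = interpM Sg g b := h
    have h2 : interpM Sg f a [] = interpM Sg g b [] := congrFun h' []
    simp [interpM] at h2
    exact hfg h2
  uniqueness := by
    intro σ' hσ' v
    have hwf := wf_Rvar hσ'
    refine ⟨solveS σ' hwf v, ⟨fun z hz => ?_, solveS_sat hwf v⟩, ?_⟩
    · exact congrFun (solveS_nondom hwf v (not_mem_dom_iff.1 hz)) |> funext
    · rintro w ⟨hext, hsat⟩
      exact solveS_unique hwf v w hsat (fun z h => hext z (not_mem_dom_iff.2 h))

/-- `G` depends only on the values of `u` on the stable variables of `s`. -/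
lemma G_agree (hwf : WellFounded (Rvar σ)) {u u' : ℕ → Tr Sg} {s : HTerm Sg}
    (hag : ∀ z ∈ treeVars (σ.rt s), u z = u' z) (p : List ℕ) :
    G σ hwf u s p = G σ hwf u' s p := by
  suffices hΦ : ∀ n z, (∀ z' ∈ treeVars (σ.rt (.var z)), u z' = u' z') →
      ∀ q, q.length < n → G σ hwf u (.var z) q = G σ hwf u' (.var z) q by
    have key : ∀ n s, (∀ z ∈ treeVars (σ.rt s), u z = u' z) →
        ∀ q, q.length < n → G σ hwf u s q = G σ hwf u' s q := by
      intro n s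
      induction s with
      | var z => exact hΦ n z
      | app f ts ih =>
        intro hags q hq
        cases q with
        | nil => rw [G_app_nil, G_app_nil]
        | cons i q' =>
          rw [G_app_cons, G_app_cons]
          split
          · exact ih _ (fun z hz => hags z (treeVars_rt_app_sub f ts _ hz)) q'
              (Nat.lt_of_succ_lt (by simpa using hq))
          · rfl
    exact key (p.length + 1) s hag p (Nat.lt_succ_self _)
  intro n
  induction n with
  | zero => exact fun z _ q hq => absurd hq (by omega)
  | succ n ihn =>
    have key : ∀ s, (∀ z ∈ treeVars (σ.rt s), u z = u' z) →
        ∀ q, q.length < n → G σ hwf u s q = G σ hwf u' s q := by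
      intro s
      induction s with
      | var z => exact fun h q hq => ihn z h q hq
      | app f ts ih =>
        intro hags q hq
        cases q with
        | nil => rw [G_app_nil, G_app_nil]
        | cons i q' =>
          rw [G_app_cons, G_app_cons]
          split
          · exact ih _ (fun z hz => hags z (treeVars_rt_app_sub f ts _ hz)) q'
              (Nat.lt_of_succ_lt (by simpa using hq))
          · rfl
    intro z
    induction z using hwf.induction with
    | _ z ihz =>
      intro hagz q hq
      by_cases hz : σ.map z = .var z
      · rw [G_var, G_var, if_pos hz, if_pos hz,
          hagz z (mem_treeVars_rt_self hz)]
      · rw [G_var, G_var, if_neg hz, if_neg hz]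
        have hagm : ∀ z' ∈ treeVars (σ.rt (σ.map z)), u z' = u' z' := by
          intro z' hz'
          apply hagz
          rwa [← apply_var, rt_apply] at hz'
        cases hm : σ.map z with
        | var z' =>
          refine ihz z' ⟨hm, hz⟩ (by rwa [hm] at hagm) q hq
        | app f ts =>
          rw [hm] at hagm
          cases q with
          | nil => rw [G_app_nil, G_app_nil]
          | cons i q' =>
            rw [G_app_cons, G_app_cons]
            split
            · exact key _ (fun z' hz' => hagm z' (treeVars_rt_app_sub f ts _ hz')) q'
                (Nat.lt_of_succ_lt_succ (by simpa using hq))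
            · rfl

end AMGU
namespace AMGU
variable {Sg : Signature} {σ : Subst Sg}

lemma hvarsN_mono {m n : ℕ} (h : m ≤ n) : σ.hvarsN m ⊆ σ.hvarsN n := by
  induction n with
  | zero =>
    have hm : m = 0 := Nat.le_zero.1 h
    subst hm
    exact subset_rfl
  | succ n ih =>
    rcases Nat.lt_or_ge m (n + 1) with h' | h'
    · exact (ih (by omega)).trans Set.subset_union_left
    · have hm : m = n + 1 := by omega
      subst hm
      exact subset_rfl

lemma hvarsN_monotone : Monotone (σ.hvarsN) := fun _ _ h => hvarsN_mono h

lemma mem_hvarsN_zero {z : ℕ} (h : σ.map z = .var z) : z ∈ σ.hvarsN 0 :=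
  not_mem_dom_iff.2 h

lemma domHv {n : ℕ} {z : ℕ} (hz : z ∈ σ.hvarsN (n + 1)) (hd : σ.map z ≠ .var z) :
    (σ.map z).varsIn ⊆ σ.hvarsN n := by
  induction n with
  | zero =>
    rcases hz with hz | hz
    · exact absurd (not_mem_dom_iff.1 hz) hd
    · exact hz.2
  | succ n ih =>
    rcases hz with hz | hz
    · exact (ih hz).trans (hvarsN_mono (Nat.le_succ n))
    · exact hz.2

lemma iter_out_of_dom {n : ℕ} {s : HTerm Sg} (hs : s.varsIn ⊆ σ.hvarsN n) :
    ∀ z ∈ (σ.iter n s).varsIn, σ.map z = .var z := by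
  induction n generalizing s with
  | zero => exact fun z hz => not_mem_dom_iff.1 (hs hz)
  | succ n ih =>
    intro z hz
    rw [iter_succ] at hz
    refine ih (s := σ.apply s) ?_ z hz
    intro z' hz'
    rw [Subst.apply, varsIn_substRaw] at hz'
    simp only [Set.mem_iUnion] at hz'
    obtain ⟨w, hw, hz'⟩ := hz'
    by_cases hd : σ.map w = .var w
    · rw [hd] at hz'
      obtain rfl : z' = w := hz'
      exact hvarsN_mono (Nat.zero_le n) (mem_hvarsN_zero hd)
    · exact domHv (hs hw) hd hz'

lemma eval_substRaw {A : Struc Sg} {v : ℕ → A.carrier} {m : ℕ → HTerm Sg} (s : HTerm Sg) :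
    (s.substRaw m).eval A v = s.eval A (fun z => (m z).eval A v) := by
  induction s with
  | var z => rfl
  | app f ts ih =>
    show A.interp f _ = A.interp f _
    congr 1
    funext i
    exact ih i

lemma eval_sat_apply {A : Struc Sg} {v : ℕ → A.carrier} (hv : A.Sat v σ.eqs) (s : HTerm Sg) :
    (σ.apply s).eval A v = s.eval A v := by
  rw [Subst.apply, eval_substRaw]
  congr 1
  funext z
  by_cases hz : σ.map z = .var z
  · rw [hz]; rfl
  · exact (hv (HTerm.var z, σ.map z) ⟨z, hz, rfl⟩).symm

lemma eval_sat_iter {A : Struc Sg} {v : ℕ → A.carrier} (hv : A.Sat v σ.eqs) (k : ℕ)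
    (s : HTerm Sg) : (σ.iter k s).eval A v = s.eval A v := by
  induction k with
  | zero => rfl
  | succ k ih => rw [iter_succ', eval_sat_apply hv, ih]

lemma occ_subtree {v : ℕ → Tr Sg} {s : HTerm Sg} {z : ℕ} (hz : z ∈ s.varsIn) :
    ∃ p : List ℕ, (∀ q, s.eval (strucM Sg) v (p ++ q) = v z q) ∧
      (∀ f ts, s = HTerm.app f ts → p ≠ []) := by
  induction s with
  | var x =>
    obtain rfl : z = x := hz
    exact ⟨[], fun q => rfl, fun f ts h => by cases h⟩
  | app f ts ih =>
    obtain ⟨j, hj⟩ : ∃ j, z ∈ (ts j).varsIn := Set.mem_iUnion.1 hz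
    obtain ⟨p', h1, _⟩ := ih j hj
    refine ⟨j.val :: p', fun q => ?_, fun _ _ _ => by simp⟩
    rw [eval_app]
    show interpM Sg f _ (j.val :: (p' ++ q)) = _
    simp only [interpM, j.isLt, dif_pos, Fin.eta]
    exact h1 q

lemma eval_finite {v : ℕ → Tr Sg} {s : HTerm Sg}
    (h : ∀ z ∈ s.varsIn, v z = fun _ => none) :
    {p : List ℕ | (s.eval (strucM Sg) v p).isSome}.Finite := by
  induction s with
  | var x =>
    have : (HTerm.var x).eval (strucM Sg) v = v x := rfl
    rw [this, h x rfl]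
    simpa using Set.finite_empty
  | app f ts ih =>
    have hsub : {p : List ℕ | ((HTerm.app f ts).eval (strucM Sg) v p).isSome} ⊆
        {([] : List ℕ)} ∪ ⋃ i : Fin (Sg.arity f),
          (List.cons i.val) '' {q | ((ts i).eval (strucM Sg) v q).isSome} := by
      intro p hp
      cases p with
      | nil => exact Or.inl rfl
      | cons a q =>
        right
        simp only [Set.mem_setOf_eq] at hp
        rw [eval_app] at hp
        simp only [interpM] at hp
        split at hp
        · next ha =>
          exact Set.mem_iUnion.2 ⟨⟨a, ha⟩, ⟨q, hp, rfl⟩⟩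
        · simp at hp
    refine Set.Finite.subset (Set.Finite.union (Set.finite_singleton _)
      (Set.finite_iUnion (fun i => Set.Finite.image _ (ih i (fun z hz =>
        h z (Set.mem_iUnion.2 ⟨i, hz⟩)))))) hsub

lemma finite_subset_iUnion_mono {A : ℕ → Set ℕ} (hA : Monotone A) {s : Set ℕ}
    (hs : s.Finite) (h : s ⊆ ⋃ n, A n) : ∃ n, s ⊆ A n := by
  revert h
  refine Set.Finite.induction_on s hs (fun _ => ⟨0, Set.empty_subset _⟩) ?_
  intro a s' ha hsf ih h
  obtain ⟨n1, hn1⟩ := ih ((Set.subset_insert a s').trans h)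
  obtain ⟨n2, hn2⟩ := Set.mem_iUnion.1 (h (Set.mem_insert a s'))
  exact ⟨max n1 n2, Set.insert_subset (hA (le_max_right n1 n2) hn2)
    (hn1.trans (hA (le_max_left n1 n2)))⟩

lemma not_hvars_step {τ : Subst Sg} {w : ℕ} (hw : w ∉ τ.hvars) :
    τ.map w ≠ .var w ∧ ∃ w', w' ∈ (τ.map w).varsIn ∧ w' ∉ τ.hvars := by
  constructor
  · intro h
    exact hw (Set.mem_iUnion.2 ⟨0, mem_hvarsN_zero h⟩)
  · by_contra h
    push_neg at h
    have hall : ∀ w' ∈ (τ.map w).varsIn, w' ∈ ⋃ n, τ.hvarsN n := fun w' hw' => h w' hw'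
    obtain ⟨n, hn⟩ := finite_subset_iUnion_mono hvarsN_monotone (varsIn_finite _) hall
    refine hw (Set.mem_iUnion.2 ⟨n + 1, Or.inr ⟨?_, hn⟩⟩)
    intro hc
    exact hw (Set.mem_iUnion.2 ⟨0, mem_hvarsN_zero hc⟩)

end AMGU
namespace AMGU
variable {Sg : Signature}

lemma infinite_depth {τ : Subst Sg} (hτ : τ.InRSF) {y : ℕ} (hy : y ∉ τ.hvars)
    {v : ℕ → Tr Sg} (hv : (strucM Sg).Sat v τ.eqs) :
    ∀ B : ℕ, ∃ p : List ℕ, B ≤ p.length ∧ (v y p).isSome := by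
  classical
  let step : {w // w ∉ τ.hvars} → {w // w ∉ τ.hvars} := fun w =>
    ⟨((not_hvars_step w.2).2).choose, ((not_hvars_step w.2).2).choose_spec.2⟩
  let f : ℕ → {w // w ∉ τ.hvars} := fun i => step^[i] ⟨y, hy⟩
  have hf0 : (f 0).1 = y := rfl
  have hfd : ∀ i, τ.map (f i).1 ≠ .var (f i).1 := fun i => (not_hvars_step (f i).2).1
  have hfs : ∀ i, (f (i + 1)).1 ∈ (τ.map (f i).1).varsIn := by
    intro i
    have hit : f (i + 1) = step (f i) := Function.iterate_succ_apply' step i _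
    rw [hit]
    exact ((not_hvars_step (f i).2).2).choose_spec.1
  have hinf : ∀ N, ∃ j, N ≤ j ∧ ∀ z', τ.map (f j).1 ≠ .var z' := by
    by_contra hc
    push_neg at hc
    obtain ⟨N, hN⟩ := hc
    refine no_var_cycle hτ (fun i => (f (N + i)).1) (fun i => hfd _) ?_
    intro i
    obtain ⟨z', hz'⟩ := hN (N + i) (by omega)
    have hmem := hfs (N + i)
    rw [hz'] at hmem
    obtain rfl : z' = (f (N + i + 1)).1 := by
      have : (f (N + i + 1)).1 = z' := hmem
      exact this.symm
    exact hz'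
  let AS : ℕ → ℕ := fun i =>
    ((Finset.range i).filter (fun j => ∀ z', τ.map (f j).1 ≠ .var z')).card
  have AS_mono : ∀ {i j}, i ≤ j → AS i ≤ AS j := fun h =>
    Finset.card_le_card (Finset.filter_subset_filter _ (Finset.range_subset_range.2 h))
  have AS_succ_app : ∀ i, (∀ z', τ.map (f i).1 ≠ .var z') → AS (i + 1) = AS i + 1 := by
    intro i hi
    show ((Finset.range (i+1)).filter _).card = _
    rw [Finset.range_add_one, Finset.filter_insert, if_pos hi,
      Finset.card_insert_of_notMem (by simp)]
  have AS_succ_var : ∀ i, ¬(∀ z', τ.map (f i).1 ≠ .var z') → AS (i + 1) = AS i := by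
    intro i hi
    show ((Finset.range (i+1)).filter _).card = _
    rw [Finset.range_add_one, Finset.filter_insert, if_neg hi]
  have hpath : ∀ i, ∃ p : List ℕ, (∀ q, v y (p ++ q) = v (f i).1 q) ∧ AS i ≤ p.length := by
    intro i
    induction i with
    | zero => exact ⟨[], fun q => rfl, by simp [AS]⟩
    | succ i ih =>
      obtain ⟨p, hp, hl⟩ := ih
      have hvfi : v (f i).1 = (τ.map (f i).1).eval (strucM Sg) v :=
        hv (HTerm.var (f i).1, τ.map (f i).1) ⟨(f i).1, hfd i, rfl⟩
      obtain ⟨q0, h1, h2⟩ := occ_subtree (v := v) (hfs i)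
      refine ⟨p ++ q0, fun q => ?_, ?_⟩
      · rw [List.append_assoc, hp (q0 ++ q)]
        rw [hvfi]
        exact h1 q
      · by_cases happ : ∀ z', τ.map (f i).1 ≠ .var z'
        · rw [AS_succ_app i happ, List.length_append]
          have hq0 : q0 ≠ [] := by
            cases hm : τ.map (f i).1 with
            | var z' => exact absurd hm (happ z')
            | app g ts => exact h2 g ts hm
          have := List.length_pos_iff.2 hq0
          omega
        · rw [AS_succ_var i happ, List.length_append]
          omega
  have hunb : ∀ k, ∃ i, k ≤ AS i := by
    intro k
    induction k with
    | zero => exact ⟨0, Nat.zero_le _⟩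
    | succ k ih =>
      obtain ⟨i, hi⟩ := ih
      obtain ⟨j, hij, happ⟩ := hinf i
      refine ⟨j + 1, ?_⟩
      rw [AS_succ_app j happ]
      have := AS_mono hij
      omega
  intro B
  obtain ⟨i, hi⟩ := hunb B
  obtain ⟨j, hij, happ⟩ := hinf i
  obtain ⟨p, hp, hl⟩ := hpath j
  refine ⟨p, by have := AS_mono hij; omega, ?_⟩
  have hnil := hp []
  rw [List.append_nil] at hnil
  rw [hnil]
  have hvfj : v (f j).1 = (τ.map (f j).1).eval (strucM Sg) v :=
    hv (HTerm.var (f j).1, τ.map (f j).1) ⟨(f j).1, hfd j, rfl⟩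
  rw [hvfj]
  cases hm : τ.map (f j).1 with
  | var z' => exact absurd hm (happ z')
  | app g ts => rw [eval_app]; simp [interpM]

end AMGU
/-- after unifying `x` with `t`, term-finiteness is preserved
for all variables independent from both `x` and `t`. -/
theorem amgu_independent_vars_preserved
    (Sg : Signature) (hconst : ∃ f, Sg.arity f = 0) (hposar : ∃ f, 0 < Sg.arity f)
    (σ : Subst Sg) (hσ : σ.IsVSubst)
    (x : ℕ) (t : HTerm Sg) (hbind : t ≠ HTerm.var x) :
    ∀ τ ∈ mgsRT (σ.eqs ∪ {(HTerm.var x, t)}),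
      σ.hvars \ {y : ℕ | (treeVars (σ.rt (HTerm.var y))
          ∩ (treeVars (σ.rt (HTerm.var x)) ∪ treeVars (σ.rt t))).Nonempty}
        ⊆ τ.hvars := by
  classical
  open AMGU in
  intro τ hτ
  obtain ⟨hτRSF, hEquiv, -⟩ := hτ
  intro y hyd
  obtain ⟨hyh, hyind⟩ := hyd
  by_contra hy
  obtain ⟨hσRSF, -⟩ := hσ
  have hwfσ := wf_Rvar hσRSF
  obtain ⟨w, ⟨hwext, hwsat⟩, -⟩ :=
    (modelM Sg).uniqueness τ hτRSF (fun _ _ => none)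
  have hwsatU : (strucM Sg).Sat w (σ.eqs ∪ {(HTerm.var x, t)}) :=
    (hEquiv (modelM Sg) w).1 hwsat
  have hwσ : (strucM Sg).Sat w σ.eqs := fun e he => hwsatU e (Set.mem_union_left _ he)
  have hwxt : w x = t.eval (strucM Sg) w :=
    hwsatU (HTerm.var x, t) (Set.mem_union_right _ rfl)
  set V : Set ℕ := treeVars (σ.rt (.var x)) ∪ treeVars (σ.rt t) with hV
  set u : ℕ → Tr Sg := fun z => if z ∈ V then w z else fun _ => none with hu
  set v : ℕ → Tr Sg := solveS σ hwfσ u with hv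
  have hagree : ∀ z ∈ V, u z = w z := fun z hz => by rw [hu]; exact if_pos hz
  have hwfix : w = solveS σ hwfσ w := solveS_unique hwfσ w w hwσ (fun z _ => rfl)
  have hvx : v x = w x := by
    funext p
    show G σ hwfσ u (.var x) p = w x p
    rw [G_agree hwfσ (fun z hz => hagree z (Or.inl hz)) p]
    conv_rhs => rw [hwfix]
    rfl
  have hvt : t.eval (strucM Sg) v = t.eval (strucM Sg) w := by
    funext p
    rw [hv, ← G_eq_eval]
    rw [G_agree hwfσ (fun z hz => hagree z (Or.inr hz)) p]
    conv_rhs => rw [hwfix]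
    exact congrFun (G_eq_eval hwfσ w t) p
  have hvsatσ : (strucM Sg).Sat v σ.eqs := solveS_sat hwfσ u
  have hvsatU : (strucM Sg).Sat v (σ.eqs ∪ {(HTerm.var x, t)}) := by
    rintro e (he | he)
    · exact hvsatσ e he
    · obtain rfl : e = (HTerm.var x, t) := he
      show (HTerm.var x).eval (strucM Sg) v = t.eval (strucM Sg) v
      rw [eval_var, hvx, hvt, hwxt]
  have hvτ : (strucM Sg).Sat v τ.eqs := (hEquiv (modelM Sg) v).2 hvsatU
  obtain ⟨n, hn⟩ := Set.mem_iUnion.1 hyh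
  have hnd : ∀ z ∈ (σ.iter n (.var y)).varsIn, σ.map z = .var z := by
    refine iter_out_of_dom ?_
    intro z hz
    obtain rfl : z = y := hz
    exact hn
  have hvy : (σ.iter n (.var y)).eval (strucM Sg) v = v y := eval_sat_iter hvsatσ n _
  have hzeros : ∀ z ∈ (σ.iter n (.var y)).varsIn, v z = fun _ => none := by
    intro z hz
    have hz1 : z ∈ treeVars (σ.rt (HTerm.var y)) := by
      have := mem_treeVars_rt_of_fixed hnd hz
      rwa [rt_iter] at this
    have hzV : z ∉ V := fun hzV => hyind ⟨z, hz1, hzV⟩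
    rw [hv, solveS_nondom hwfσ u (hnd z hz), hu]
    exact if_neg hzV
  have hfin : {p : List ℕ | (v y p).isSome}.Finite := by
    have := eval_finite (v := v) hzeros
    rwa [hvy] at this
  obtain ⟨B, hB⟩ := (hfin.image List.length).bddAbove
  obtain ⟨p, hpB, hps⟩ := infinite_depth hτRSF hy hvτ (B + 1)
  have hple : p.length ≤ B := hB ⟨p, hps, rfl⟩
  omega
end

section
/- Let σ ∈ RSubst and t ∈ HTerms. Then (a) vars(rt(t, σ)) ∩ dom(σ) = ∅, and (b) rt(t, σ) is a finite term if and only if there exists i ∈ ℕ such that rt(t, σ) = tσ^i. -/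
section Aux
variable {Sg : Signature} (σ : Subst Sg)

lemma iter_succ (t : HTerm Sg) (i : ℕ) : σ.iter (i+1) t = σ.iter i (σ.apply t) :=
  Function.iterate_succ_apply _ _ _

lemma iter_add (t : HTerm Sg) (i j : ℕ) : σ.iter (i+j) t = σ.iter i (σ.iter j t) :=
  Function.iterate_add_apply _ _ _ _

lemma apply_var (x : ℕ) : σ.apply (.var x) = σ.map x := rfl

lemma apply_app (f : Sg.Sym) (ts : Fin (Sg.arity f) → HTerm Sg) :
    σ.apply (.app f ts) = .app f (fun j => σ.apply (ts j)) := rfl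

lemma iter_var_notdom {y : ℕ} (hy : y ∉ σ.dom) (i : ℕ) :
    σ.iter i (.var y) = .var y := by
  induction i with
  | zero => rfl
  | succ k ih =>
    rw [iter_succ, apply_var]
    have : σ.map y = .var y := by
      by_contra h; exact hy h
    rw [this]; exact ih

lemma iter_app (f : Sg.Sym) (ts : Fin (Sg.arity f) → HTerm Sg) (i : ℕ) :
    σ.iter i (.app f ts) = .app f (fun j => σ.iter i (ts j)) := by
  induction i generalizing ts with
  | zero => rfl
  | succ k ih =>
    rw [iter_succ, apply_app, ih]
    exact congrArg _ (funext fun j => (iter_succ σ (ts j) k).symm)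

end Aux
section Aux2
variable {Sg : Signature} {σ : Subst Sg}

/-- Safe list access. -/
def nth (l : List ℕ) (i : ℕ) : ℕ := l.getD i 0

lemma nth_eq_getElem (l : List ℕ) (i : ℕ) (h : i < l.length) :
    nth l i = l[i]'h := List.getD_eq_getElem l 0 h

lemma nth_mem (l : List ℕ) (i : ℕ) (h : i < l.length) : nth l i ∈ l := by
  rw [nth_eq_getElem l i h]; exact List.getElem_mem h

lemma nth_drop (l : List ℕ) (j i : ℕ) (h : i < (l.drop j).length) :
    nth (l.drop j) i = nth l (j + i) := by
  rw [nth_eq_getElem _ i h, nth_eq_getElem l (j+i) (by simp at h; omega)]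
  exact List.getElem_drop

lemma nth_append_left (l : List ℕ) (y : ℕ) (i : ℕ) (h : i < l.length) :
    nth (l ++ [y]) i = nth l i := by
  rw [nth_eq_getElem _ i (by simp; omega), nth_eq_getElem l i h]
  exact List.getElem_append_left h

lemma nth_append_last (l : List ℕ) (y : ℕ) : nth (l ++ [y]) l.length = y := by
  rw [nth_eq_getElem _ _ (by simp)]
  simp

lemma nth_indexOf (l : List ℕ) (y : ℕ) (h : y ∈ l) : nth l (l.idxOf y) = y := by
  rw [nth_eq_getElem _ _ (List.idxOf_lt_length_iff.mpr h)]
  exact List.getElem_idxOf _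

lemma nth_inj (l : List ℕ) (hnd : l.Nodup) (i j : ℕ) (hi : i < l.length)
    (hj : j < l.length) (hij : nth l i = nth l j) : i = j := by
  rw [nth_eq_getElem l i hi, nth_eq_getElem l j hj] at hij
  exact (hnd.getElem_inj_iff).mp hij

lemma getLast_eq_nth (l : List ℕ) (hne : l ≠ []) :
    l.getLast hne = nth l (l.length - 1) := by
  rw [nth_eq_getElem l _ (by have := List.length_pos_iff.mpr hne; omega)]
  exact List.getLast_eq_getElem hne

lemma cycle_contra (hσ : σ.InRSF) (c : List ℕ) (h2 : 2 ≤ c.length) (hnd : c.Nodup)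
    (hdom : ∀ y ∈ c, y ∈ σ.dom)
    (hch : ∀ i, i + 1 < c.length → σ.map (nth c i) = .var (nth c (i+1)))
    (hlast : σ.map (nth c (c.length - 1)) = .var (nth c 0)) : False := by
  set n := c.length with hn
  refine hσ {p | ∃ i < n, p = (nth c i, HTerm.var (nth c ((i + 1) % n)))} ?_
    ⟨n, by omega, nth c, ?_, rfl⟩
  · rintro p ⟨i, hi, rfl⟩
    refine ⟨hdom _ (nth_mem c i hi), ?_⟩
    show HTerm.var (nth c ((i+1) % n)) = σ.map (nth c i)
    rcases Nat.lt_or_ge (i+1) n with h | h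
    · rw [Nat.mod_eq_of_lt h, hch i h]
    · have hmod : (i + 1) % n = 0 := by
        have : i + 1 = n := by omega
        simp [this]
      have hieq : i = n - 1 := by omega
      rw [hmod, hieq, hlast]
  · intro i j hi hj hij
    exact nth_inj c hnd i j hi hj hij

lemma cycle_case (hσ : σ.InRSF) (l : List ℕ) (hne : l ≠ []) (hnd : l.Nodup)
    (hdom : ∀ y ∈ l, y ∈ σ.dom)
    (hch : ∀ i, i + 1 < l.length → σ.map (nth l i) = .var (nth l (i+1)))
    {y : ℕ} (hmx : σ.map (l.getLast hne) = .var y) (hyl : y ∈ l) : False := by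
  classical
  have hx : l.getLast hne ∈ σ.dom := hdom _ (List.getLast_mem hne)
  have hlpos : 0 < l.length := List.length_pos_iff.mpr hne
  set j := l.idxOf y with hj
  have hjlt : j < l.length := List.idxOf_lt_length_iff.mpr hyl
  have hjy : nth l j = y := nth_indexOf l y hyl
  have hyx : y ≠ l.getLast hne := by
    intro h
    exact hx (show σ.map _ = _ by rw [hmx, h])
  have hjlt1 : j < l.length - 1 := by
    rcases Nat.lt_or_ge j (l.length - 1) with h | h
    · exact h
    · exfalso
      have hje : j = l.length - 1 := by omega
      exact hyx (by rw [getLast_eq_nth l hne, ← hje, hjy])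
  have hclen : (l.drop j).length = l.length - j := List.length_drop
  refine cycle_contra hσ (l.drop j) (by omega) (List.Nodup.sublist (List.drop_sublist j l) hnd)
    (fun z hz => hdom z (List.mem_of_mem_drop hz)) ?_ ?_
  · intro i h
    rw [nth_drop l j i (by omega), nth_drop l j (i+1) (by omega),
      ← Nat.add_assoc]
    exact hch (j + i) (by omega)
  · rw [hclen, nth_drop l j _ (by omega), nth_drop l j 0 (by omega)]
    have h1 : j + (l.length - j - 1) = l.length - 1 := by omega
    rw [h1, Nat.add_zero, hjy, ← getLast_eq_nth l hne, hmx]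

lemma reach_terminal (hσ : σ.InRSF) :
    ∀ (fuel : ℕ) (l : List ℕ) (hne : l ≠ []), l.Nodup → (∀ y ∈ l, y ∈ σ.dom) →
    (∀ i, i + 1 < l.length → σ.map (nth l i) = .var (nth l (i+1))) →
    σ.finite.toFinset.card ≤ fuel + l.length →
    ∃ (N z : ℕ), σ.iter N (.var (l.getLast hne)) = .var z ∧
      (z ∉ σ.dom ∨ ∃ f ts, σ.map z = .app f ts) := by
  intro fuel
  induction fuel with
  | zero =>
    intro l hne hnd hdom hch hcard
    set x := l.getLast hne with hxdef
    have hx : x ∈ σ.dom := hdom _ (List.getLast_mem hne)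
    rcases hmx : σ.map x with y | ⟨f, ts⟩
    · by_cases hyl : y ∈ l
      · exact (cycle_case hσ l hne hnd hdom hch hmx hyl).elim
      · by_cases hyd : y ∈ σ.dom
        · exfalso
          have hsub : insert y l.toFinset ⊆ σ.finite.toFinset := by
            intro a ha
            rw [Set.Finite.mem_toFinset]
            rcases Finset.mem_insert.mp ha with rfl | ha
            · exact hyd
            · exact hdom a (List.mem_toFinset.mp ha)
          have hcardins : (insert y l.toFinset).card = l.length + 1 := by
            rw [Finset.card_insert_of_notMem (by simpa using hyl),
              List.toFinset_card_of_nodup hnd]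
          have := Finset.card_le_card hsub
          omega
        · exact ⟨1, y, by rw [show (1:ℕ) = 0 + 1 from rfl, iter_succ, apply_var, hmx]; rfl,
            Or.inl hyd⟩
    · exact ⟨0, x, rfl, Or.inr ⟨f, ts, hmx⟩⟩
  | succ k ih =>
    intro l hne hnd hdom hch hcard
    set x := l.getLast hne with hxdef
    have hx : x ∈ σ.dom := hdom _ (List.getLast_mem hne)
    rcases hmx : σ.map x with y | ⟨f, ts⟩
    · by_cases hyl : y ∈ l
      · exact (cycle_case hσ l hne hnd hdom hch hmx hyl).elim
      · by_cases hyd : y ∈ σ.dom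
        · have hne' : l ++ [y] ≠ [] := by simp
          have hnd' : (l ++ [y]).Nodup := by
            rw [List.nodup_append]
            refine ⟨hnd, List.nodup_singleton y, ?_⟩
            intro a ha b hb
            rw [List.mem_singleton] at hb
            subst hb
            intro hab
            exact hyl (by rw [← hab]; exact ha)
          have hdom' : ∀ z ∈ l ++ [y], z ∈ σ.dom := by
            intro z hz
            rcases List.mem_append.mp hz with h | h
            · exact hdom z h
            · simp at h; exact h ▸ hyd
          have hlen : (l ++ [y]).length = l.length + 1 := by simp
          have hlpos : 0 < l.length := List.length_pos_iff.mpr hne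
          have hch' : ∀ i, i + 1 < (l ++ [y]).length →
              σ.map (nth (l ++ [y]) i) = .var (nth (l ++ [y]) (i+1)) := by
            intro i h
            rw [hlen] at h
            by_cases hi : i + 1 < l.length
            · rw [nth_append_left l y i (by omega), nth_append_left l y (i+1) hi]
              exact hch i hi
            · have hieq : i = l.length - 1 := by omega
              have hieq1 : i + 1 = l.length := by omega
              rw [nth_append_left l y i (by omega), hieq1, nth_append_last l y,
                hieq, ← getLast_eq_nth l hne, hmx]
          have hlast' : (l ++ [y]).getLast hne' = y := by
            simp [List.getLast_append]
          obtain ⟨N, z, hNz, hterm⟩ := ih (l ++ [y]) hne' hnd' hdom' hch'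
            (by rw [hlen]; omega)
          rw [hlast'] at hNz
          refine ⟨N + 1, z, ?_, hterm⟩
          rw [iter_succ, apply_var, hmx]
          exact hNz
        · exact ⟨1, y, by rw [show (1:ℕ) = 0 + 1 from rfl, iter_succ, apply_var, hmx]; rfl,
            Or.inl hyd⟩
    · exact ⟨0, x, rfl, Or.inr ⟨f, ts, hmx⟩⟩

end Aux2
section Aux3
variable {Sg : Signature} {σ : Subst Sg}

/-- Shape stabilization: some iterate is a non-domain variable or an application. -/
lemma shape_stab (hσ : σ.InRSF) (t : HTerm Sg) :
    ∃ N, (∃ y, y ∉ σ.dom ∧ σ.iter N t = .var y) ∨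
      (∃ f ts, σ.iter N t = .app f ts) := by
  cases t with
  | app f ts => exact ⟨0, Or.inr ⟨f, ts, rfl⟩⟩
  | var x =>
    by_cases hx : x ∈ σ.dom
    · have hlast : [x].getLast (by simp) = x := rfl
      obtain ⟨N, z, hNz, hterm⟩ := reach_terminal hσ σ.finite.toFinset.card [x] (by simp)
        (List.nodup_singleton x) (by simpa using hx) (by simp [List.length_singleton])
        (by simp)
      rw [hlast] at hNz
      rcases hterm with hz | ⟨f, ts, hf⟩
      · exact ⟨N, Or.inl ⟨z, hz, hNz⟩⟩
      · refine ⟨N + 1, Or.inr ⟨f, ts, ?_⟩⟩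
        rw [show N + 1 = 1 + N from by omega, iter_add, hNz,
          show (1:ℕ) = 0 + 1 from rfl, iter_succ, apply_var, hf]
        rfl
    · exact ⟨0, Or.inl ⟨x, hx, rfl⟩⟩

lemma labelAt_nil_isSome (u : HTerm Sg) : (u.labelAt []).isSome := by
  cases u <;> rfl

/-- Path stabilization with variable condition. -/
lemma path_stab (hσ : σ.InRSF) (p : List ℕ) :
    ∀ t : HTerm Sg, ∃ N v, (∀ i, N ≤ i → (σ.iter i t).labelAt p = v) ∧
      (∀ x, v = some (Sum.inr x) → x ∉ σ.dom) := by
  induction p with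
  | nil =>
    intro t
    obtain ⟨N, h⟩ := shape_stab hσ t
    rcases h with ⟨y, hy, hvar⟩ | ⟨f, ts, happ⟩
    · refine ⟨N, some (Sum.inr y), fun i hi => ?_, ?_⟩
      · rw [show i = (i - N) + N from by omega, iter_add, hvar, iter_var_notdom σ hy]
        rfl
      · rintro x hx
        injection hx with hx
        injection hx with hx
        exact hx ▸ hy
    · refine ⟨N, some (Sum.inl f), fun i hi => ?_, by rintro x ⟨⟩⟩
      rw [show i = (i - N) + N from by omega, iter_add, happ, iter_app]
      rfl
  | cons a q ih =>
    intro t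
    obtain ⟨N, h⟩ := shape_stab hσ t
    rcases h with ⟨y, hy, hvar⟩ | ⟨f, ts, happ⟩
    · refine ⟨N, none, fun i hi => ?_, by rintro x ⟨⟩⟩
      rw [show i = (i - N) + N from by omega, iter_add, hvar, iter_var_notdom σ hy]
      rfl
    · by_cases ha : a < Sg.arity f
      · obtain ⟨N', v, hstab, hv⟩ := ih (ts ⟨a, ha⟩)
        refine ⟨N + N', v, fun i hi => ?_, hv⟩
        rw [show i = (i - N) + N from by omega, iter_add, happ, iter_app]
        show (if h : a < Sg.arity f then
          ((σ.iter (i - N) (ts ⟨a, h⟩)).labelAt q) else none) = v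
        rw [dif_pos ha]
        exact hstab (i - N) (by omega)
      · refine ⟨N, none, fun i hi => ?_, by rintro x ⟨⟩⟩
        rw [show i = (i - N) + N from by omega, iter_add, happ, iter_app]
        show (if h : a < Sg.arity f then
          ((σ.iter (i - N) (ts ⟨a, h⟩)).labelAt q) else none) = none
        rw [dif_neg ha]

/-- `rt` equals any eventually-stable value. -/
lemma rt_eq (σ : Subst Sg) (t : HTerm Sg) (p : List ℕ) (v : Option (Sg.Sym ⊕ ℕ))
    (N : ℕ) (h : ∀ i, N ≤ i → (σ.iter i t).labelAt p = v) : σ.rt t p = v := by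
  have hex : ∃ w : Option (Sg.Sym ⊕ ℕ), ∃ M : ℕ, ∀ i ≥ M, (σ.iter i t).labelAt p = w :=
    ⟨v, N, fun i hi => h i hi⟩
  rw [Subst.rt, dif_pos hex]
  obtain ⟨M, hM⟩ := hex.choose_spec
  have h1 := hM (max N M) (le_max_right _ _)
  have h2 := h (max N M) (le_max_left _ _)
  rw [h1] at h2
  exact h2

end Aux3
section Aux4
variable {Sg : Signature} {σ : Subst Sg}

/-- A finite term has finitely many labeled paths. -/
lemma finite_paths (u : HTerm Sg) : {p : List ℕ | (u.labelAt p).isSome}.Finite := by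
  induction u with
  | var x =>
    refine Set.Finite.subset (Set.finite_singleton []) ?_
    rintro (_ | ⟨a, p⟩) hp
    · exact rfl
    · simp only [Set.mem_setOf_eq, HTerm.labelAt] at hp
      exact absurd hp (by simp)
  | app f ts ih =>
    refine Set.Finite.subset (Set.Finite.insert []
      (Set.finite_iUnion (fun j : Fin (Sg.arity f) =>
        ((ih j).image (List.cons (j : ℕ))))) ) ?_
    rintro (_ | ⟨a, p⟩) hp
    · exact Set.mem_insert _ _
    · simp only [Set.mem_setOf_eq, HTerm.labelAt] at hp
      by_cases ha : a < Sg.arity f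
      · rw [dif_pos ha] at hp
        refine Set.mem_insert_of_mem _ (Set.mem_iUnion.mpr ⟨⟨a, ha⟩, ⟨p, hp, rfl⟩⟩)
      · rw [dif_neg ha] at hp
        exact absurd hp (by simp)

/-- Substitution preserves labeled paths. -/
lemma labelAt_isSome_substRaw (m : ℕ → HTerm Sg) :
    ∀ (u : HTerm Sg) (p : List ℕ), (u.labelAt p).isSome →
      ((u.substRaw m).labelAt p).isSome := by
  intro u
  induction u with
  | var x =>
    rintro (_ | ⟨a, p⟩) hp
    · exact labelAt_nil_isSome _
    · exact absurd hp (by simp [HTerm.labelAt])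
  | app f ts ih =>
    rintro (_ | ⟨a, p⟩) hp
    · exact rfl
    · simp only [HTerm.labelAt, HTerm.substRaw] at hp ⊢
      by_cases ha : a < Sg.arity f
      · rw [dif_pos ha] at hp ⊢
        exact ih ⟨a, ha⟩ p hp
      · rw [dif_neg ha] at hp
        exact absurd hp (by simp)

lemma labelAt_isSome_mono (t : HTerm Sg) (p : List ℕ) {i j : ℕ} (hij : i ≤ j)
    (h : ((σ.iter i t).labelAt p).isSome) : ((σ.iter j t).labelAt p).isSome := by
  rw [show j = (j - i) + i from by omega, iter_add]
  generalize σ.iter i t = u at h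
  induction (j - i) with
  | zero => exact h
  | succ k ihk =>
    rw [show σ.iter (k+1) u = σ.apply (σ.iter k u) from Function.iterate_succ_apply' _ _ _]
    exact labelAt_isSome_substRaw σ.map (σ.iter k u) p ihk

end Aux4
/-- For `σ ∈ RSubst` and `t ∈ HTerms`,
(a) `vars(rt(t, σ)) ∩ dom(σ) = ∅` and
(b) `rt(t, σ)` is finite iff `rt(t, σ) = tσ^i` for some `i`. -/
theorem rt_vars_and_finiteness
    (Sg : Signature) (hconst : ∃ f, Sg.arity f = 0) (hposar : ∃ f, 0 < Sg.arity f)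
    (σ : Subst Sg) (hσ : σ.InRSF) (t : HTerm Sg) :
    treeVars (σ.rt t) ∩ σ.dom = ∅
    ∧ (treeFinite (σ.rt t) ↔ ∃ i : ℕ, σ.rt t = (σ.iter i t).labelAt) := by
  classical
  have hstab : ∀ p, ∃ N, (∀ i, N ≤ i → (σ.iter i t).labelAt p = σ.rt t p) ∧
      (∀ x, σ.rt t p = some (Sum.inr x) → x ∉ σ.dom) := by
    intro p
    obtain ⟨N, v, h, hv⟩ := path_stab hσ p t
    have heq := rt_eq σ t p v N h
    exact ⟨N, by rw [heq]; exact h, by rw [heq]; exact hv⟩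
  constructor
  · rw [Set.eq_empty_iff_forall_notMem]
    rintro x ⟨⟨p, hp⟩, hxd⟩
    obtain ⟨N, h1, h2⟩ := hstab p
    exact h2 x hp hxd
  · constructor
    · intro hF
      choose N hN hNv using hstab
      refine ⟨hF.toFinset.sup N, funext fun p => ?_⟩
      by_cases hp : (σ.rt t p).isSome
      · have hmem : p ∈ hF.toFinset := by
          exact (Set.Finite.mem_toFinset hF).mpr hp
        exact (hN p _ (Finset.le_sup hmem)).symm
      · have hnone : σ.rt t p = none := Option.not_isSome_iff_eq_none.mp hp
        rw [hnone]
        by_contra hcon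
        have hsome : ((σ.iter (hF.toFinset.sup N) t).labelAt p).isSome :=
          Option.ne_none_iff_isSome.mp (fun h => hcon h.symm)
        have h2 : ((σ.iter (max (hF.toFinset.sup N) (N p)) t).labelAt p).isSome :=
          labelAt_isSome_mono t p (le_max_left _ _) hsome
        have h3 := hN p (max (hF.toFinset.sup N) (N p)) (le_max_right _ _)
        rw [hnone] at h3
        rw [h3] at h2
        exact absurd h2 (by simp)
    · rintro ⟨i, hi⟩
      rw [treeFinite, show σ.rt t = (σ.iter i t).labelAt from hi]
      exact finite_paths _
end

section
/- Let σ ∈ VSubst. Then hvars(σ) = hvars_1(σ) = {y ∈ Vars | vars(yσ) ∩ dom(σ) = ∅}; that is, for a variable-idempotent substitution the fixpoint computation of the finiteness operator stabilizes after one iteration, and hvars(σ) consists exactly of the variables whose image contains no domain variable of σ. -/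
/-- For `σ ∈ VSubst`, the fixpoint computation of `hvars`
stabilizes after one iteration, and
`hvars(σ) = hvars₁(σ) = {y | vars(yσ) ∩ dom(σ) = ∅}`. -/
theorem vsubst_hvars_one_iteration
    (Sg : Signature) (hconst : ∃ f, Sg.arity f = 0) (hposar : ∃ f, 0 < Sg.arity f)
    (σ : Subst Sg) (hσ : σ.IsVSubst) :
    σ.hvars = σ.hvarsN 1
    ∧ σ.hvarsN 1 = {y : ℕ | (σ.map y).varsIn ∩ σ.dom = ∅} := by
  have h1 : σ.hvarsN 1 = {y : ℕ | (σ.map y).varsIn ∩ σ.dom = ∅} := by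
    ext y
    simp only [Subst.hvarsN, Set.mem_union, Set.mem_setOf_eq]
    constructor
    · rintro (hy | ⟨hy, hsub⟩)
      · have : σ.map y = HTerm.var y := by
          by_contra h; exact hy h
        rw [this]
        simp only [HTerm.varsIn]
        ext z
        simp only [Set.mem_inter_iff, Set.mem_singleton_iff, Set.mem_empty_iff_false,
          iff_false, not_and]
        rintro rfl hz; exact hy hz
      · ext z
        simp only [Set.mem_inter_iff, Set.mem_empty_iff_false, iff_false, not_and]
        intro hz hdom
        exact (hsub hz) hdom
    · intro h
      by_cases hy : y ∈ σ.dom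
      · right
        refine ⟨hy, fun z hz hzd => ?_⟩
        have : z ∈ (σ.map y).varsIn ∩ σ.dom := ⟨hz, hzd⟩
        rw [h] at this; exact this
      · left; exact hy
  -- key lemma: vars of substRaw
  have hvsub : ∀ t : HTerm Sg,
      (t.substRaw σ.map).varsIn = ⋃ z ∈ t.varsIn, (σ.map z).varsIn := by
    intro t
    induction t with
    | var x => simp [HTerm.substRaw, HTerm.varsIn]
    | app f ts ih =>
        simp only [HTerm.substRaw, HTerm.varsIn, ih]
        rw [Set.biUnion_iUnion]
  -- idempotence, for variables:
  have hidem : ∀ y : ℕ,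
      (⋃ z ∈ (σ.map y).varsIn, (σ.map z).varsIn) = (σ.map y).varsIn := by
    intro y
    have := hσ.2 (HTerm.var y)
    simpa only [Subst.apply, HTerm.substRaw, hvsub] using this
  -- all hvarsN n ⊆ hvarsN 1
  have hmono : ∀ n, σ.hvarsN n ⊆ σ.hvarsN 1 := by
    intro n
    induction n with
    | zero => exact fun y hy => Or.inl hy
    | succ m ih =>
        rintro y (hy | ⟨hy, hsub⟩)
        · exact ih hy
        · rw [h1]
          simp only [Set.mem_setOf_eq]
          have hsub1 : (σ.map y).varsIn ⊆ σ.hvarsN 1 := fun z hz => ih (hsub hz)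
          rw [h1] at hsub1
          rw [← hidem y]
          ext z
          simp only [Set.mem_inter_iff, Set.mem_iUnion, Set.mem_empty_iff_false,
            iff_false, not_and]
          rintro ⟨w, hw, hz⟩ hzd
          have : z ∈ (σ.map w).varsIn ∩ σ.dom := ⟨hz, hzd⟩
          rw [hsub1 hw] at this
          exact this
  constructor
  · apply Set.Subset.antisymm
    · exact Set.iUnion_subset hmono
    · exact Set.subset_iUnion σ.hvarsN 1
  · exact h1
end

section
/- Let σ, τ ∈ RSubst and W ⊆ Vars, and suppose RT ⊢ ∀(∃W.σ ↔ ∃W.τ) (the existential quantifications of σ and τ over the variables of W are equivalent in RT). Then hvars(σ) ∖ W = hvars(τ) ∖ W. -/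
namespace Stmt19

open HTerm

variable {Sg : Signature}

abbrev Tree (Sg : Signature) := List ℕ → Option (Sg.Sym ⊕ ℕ)

def interpT (f : Sg.Sym) (a : Fin (Sg.arity f) → Tree Sg) : Tree Sg
  | [] => some (Sum.inl f)
  | i :: p => if h : i < Sg.arity f then a ⟨i, h⟩ p else none

def strucT (Sg : Signature) : Struc Sg := ⟨Tree Sg, interpT⟩

/-- one step of variable dereferencing -/
def nx (σ : Subst Sg) (x : ℕ) : ℕ :=
  match σ.map x with
  | .var y => y
  | .app _ _ => x

lemma nx_spec {σ : Subst Sg} {x : ℕ} (h : nx σ x ≠ x) :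
    x ∈ σ.dom ∧ σ.map x = .var (nx σ x) := by
  cases hm : σ.map x with
  | var y =>
    have hnx : nx σ x = y := by simp [nx, hm]
    rw [hnx] at h ⊢
    refine ⟨?_, rfl⟩
    simp only [Subst.dom, Set.mem_setOf_eq, hm]
    intro hc; injection hc with hc; exact h hc
  | app f ts =>
    have hnx : nx σ x = x := by simp [nx, hm]
    exact absurd hnx h

lemma nodom_nx {σ : Subst Sg} {x : ℕ} (h : x ∉ σ.dom) : nx σ x = x := by
  have hm : σ.map x = .var x := by by_contra hc; exact h hc
  simp [nx, hm]

/-- the chase sequence -/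
def ziF (σ : Subst Sg) (z : ℕ) (i : ℕ) : ℕ := (nx σ)^[i] z

lemma ziF_zero (σ : Subst Sg) (z : ℕ) : ziF σ z 0 = z := rfl

lemma ziF_succ (σ : Subst Sg) (z : ℕ) (i : ℕ) :
    ziF σ z (i + 1) = nx σ (ziF σ z i) := Function.iterate_succ_apply' _ _ _

lemma ziF_add (σ : Subst Sg) (z : ℕ) (m n : ℕ) :
    ziF σ z (m + n) = (nx σ)^[m] (ziF σ z n) := Function.iterate_add_apply _ _ _ _

/-- no cycles in the dereferencing graph (from rational solved form) -/
lemma no_nx_cycle {σ : Subst Sg} (hσ : σ.InRSF) (z : ℕ) {d : ℕ} (hd : 0 < d)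
    (hcyc : ziF σ z d = z) : nx σ z = z := by
  by_contra hne
  have hP : ∃ k, 0 < k ∧ ziF σ z k = z := ⟨d, hd, hcyc⟩
  classical
  set D := Nat.find hP with hDdef
  obtain ⟨hD0, hDcyc⟩ : 0 < D ∧ ziF σ z D = z := Nat.find_spec hP
  -- every ziF i, i < D, is non-terminal
  have hnterm : ∀ i < D, nx σ (ziF σ z i) ≠ ziF σ z i := by
    intro i hi hfix
    have h3 : ziF σ z ((D - i) + i) = (nx σ)^[D - i] (ziF σ z i) := ziF_add σ z _ _
    rw [Function.iterate_fixed hfix, Nat.sub_add_cancel (le_of_lt hi), hDcyc] at h3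
    exact hne (by rw [h3]; exact hfix)
  -- distinctness
  have hdist : ∀ i j, i < D → j < D → ziF σ z i = ziF σ z j → i = j := by
    intro i j hi hj hij
    by_contra hne'
    wlog hlt : i < j generalizing i j
    · exact this j i hj hi hij.symm (Ne.symm hne') (by omega)
    have hper : ziF σ z (D - (j - i)) = z := by
      have h1 : ziF σ z ((D - j) + j) = (nx σ)^[D - j] (ziF σ z j) := ziF_add σ z _ _
      rw [Nat.sub_add_cancel (le_of_lt hj), hDcyc, ← hij] at h1
      have h2 : ziF σ z ((D - j) + i) = (nx σ)^[D - j] (ziF σ z i) := ziF_add σ z _ _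
      rw [← h2] at h1
      have h4 : D - j + i = D - (j - i) := by omega
      rw [h4] at h1
      exact h1.symm
    have : D ≤ D - (j - i) := Nat.find_le ⟨by omega, hper⟩
    omega
  -- each ziF i in dom with var binding
  have hbind : ∀ i < D, ziF σ z i ∈ σ.dom ∧
      σ.map (ziF σ z i) = .var (ziF σ z ((i + 1) % D)) := by
    intro i hi
    obtain ⟨hdom, hmap⟩ := nx_spec (hnterm i hi)
    refine ⟨hdom, ?_⟩
    rw [hmap]
    congr 1
    rcases Nat.lt_or_ge (i + 1) D with h | h
    · rw [Nat.mod_eq_of_lt h, ziF_succ]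
    · have hiD : i + 1 = D := by omega
      rw [hiD, Nat.mod_self, ziF_zero, ← ziF_succ, hiD]
      exact hDcyc
  -- build the circular binding set
  have hsub : {p : ℕ × HTerm Sg | ∃ i < D, p = (ziF σ z i, HTerm.var (ziF σ z ((i + 1) % D)))}
      ⊆ σ.bindings := by
    rintro p ⟨i, hi, rfl⟩
    exact ⟨(hbind i hi).1, ((hbind i hi).2).symm⟩
  have hD2 : 1 < D := by
    rcases Nat.lt_or_ge 1 D with h | h
    · exact h
    · exfalso
      have hD1 : D = 1 := by omega
      rw [hD1] at hDcyc
      rw [ziF_succ, ziF_zero] at hDcyc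
      exact hne hDcyc
  exact hσ _ hsub ⟨D, hD2, ziF σ z, hdist, rfl⟩

/-- chasing variable renamings terminates -/
lemma chase_exists {σ : Subst Sg} (hσ : σ.InRSF) (x : ℕ) :
    ∃ k, nx σ (ziF σ x k) = ziF σ x k := by
  by_contra hall
  push_neg at hall
  have hdomall : ∀ k, ziF σ x k ∈ σ.dom := fun k => (nx_spec (hall k)).1
  have hfin : σ.dom.Finite := σ.finite
  obtain ⟨i, -, j, -, hne, hij⟩ :=
    Set.infinite_univ.exists_ne_map_eq_of_mapsTo
      (f := fun k => ziF σ x k) (fun k _ => hdomall k) hfin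
  wlog hlt : i < j generalizing i j
  · exact this j i hne.symm hij.symm (by omega)
  have hcyc : ziF σ (ziF σ x i) (j - i) = ziF σ x i := by
    show (nx σ)^[j - i] ((nx σ)^[i] x) = (nx σ)^[i] x
    rw [← Function.iterate_add_apply, Nat.sub_add_cancel (le_of_lt hlt)]
    exact hij.symm
  exact hall i (no_nx_cycle hσ _ (by omega) hcyc)

end Stmt19
namespace Stmt19

open HTerm Classical

variable {Sg : Signature}

noncomputable def chaseK {σ : Subst Sg} (hσ : σ.InRSF) (x : ℕ) : ℕ :=
  Nat.find (chase_exists hσ x)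

noncomputable def chaseVar {σ : Subst Sg} (hσ : σ.InRSF) (x : ℕ) : ℕ :=
  ziF σ x (chaseK hσ x)

lemma chase_terminal {σ : Subst Sg} (hσ : σ.InRSF) (x : ℕ) :
    nx σ (chaseVar hσ x) = chaseVar hσ x := Nat.find_spec (chase_exists hσ x)

lemma chase_fixed {σ : Subst Sg} (hσ : σ.InRSF) {x : ℕ} (h : nx σ x = x) :
    chaseVar hσ x = x := by
  have h0 : chaseK hσ x = 0 :=
    Nat.le_zero.mp (Nat.find_le (h := chase_exists hσ x)
      (show nx σ (ziF σ x 0) = ziF σ x 0 from h))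
  rw [chaseVar, h0, ziF_zero]

lemma chase_step {σ : Subst Sg} (hσ : σ.InRSF) {x : ℕ} (h : nx σ x ≠ x) :
    chaseVar hσ x = chaseVar hσ (nx σ x) := by
  have hk1 : 1 ≤ chaseK hσ x := by
    rcases Nat.eq_zero_or_pos (chaseK hσ x) with h0 | h0
    · exfalso
      have := chase_terminal hσ x
      rw [chaseVar, h0, ziF_zero] at this
      exact h this
    · exact h0
  set k := chaseK hσ x with hk
  have hiter : chaseVar hσ x = ziF σ (nx σ x) (k - 1) := by
    rw [chaseVar, ← hk]
    show (nx σ)^[k] x = (nx σ)^[k-1] (nx σ x)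
    rw [← Function.iterate_succ_apply]
    congr 1
    omega
  have hterm' : nx σ (ziF σ (nx σ x) (k - 1)) = ziF σ (nx σ x) (k - 1) := by
    rw [← hiter]; exact chase_terminal hσ x
  have hk' : chaseK hσ (nx σ x) ≤ k - 1 := Nat.find_le hterm'
  have : chaseVar hσ (nx σ x) = ziF σ (nx σ x) (k - 1) := by
    rw [chaseVar]
    have : ziF σ (nx σ x) (k - 1) =
        (nx σ)^[(k - 1) - chaseK hσ (nx σ x)] (ziF σ (nx σ x) (chaseK hσ (nx σ x))) := by
      rw [← ziF_add]
      congr 1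
      omega
    rw [this]
    exact (Function.iterate_fixed (chase_terminal hσ (nx σ x)) _).symm
  rw [hiter, this]

lemma chase_nodom {σ : Subst Sg} (hσ : σ.InRSF) {x : ℕ} (h : x ∉ σ.dom) :
    chaseVar hσ x = x := chase_fixed hσ (nodom_nx h)

open Classical in
noncomputable def resolve {σ : Subst Sg} (hσ : σ.InRSF) : HTerm Sg → HTerm Sg
  | .var x =>
    if chaseVar hσ x ∈ σ.dom then σ.map (chaseVar hσ x) else .var (chaseVar hσ x)
  | .app f ts => .app f ts

lemma resolve_app {σ : Subst Sg} (hσ : σ.InRSF) (f : Sg.Sym) (ts) :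
    resolve hσ (.app f ts) = .app f ts := rfl

lemma resolve_var_dom {σ : Subst Sg} (hσ : σ.InRSF) {x : ℕ} (hx : x ∈ σ.dom) :
    resolve hσ (.var x) = resolve hσ (σ.map x) := by
  cases hm : σ.map x with
  | var y =>
    have hnx : nx σ x = y := by simp [nx, hm]
    have hne : nx σ x ≠ x := by
      rw [hnx]; intro hc; rw [hc] at hm; exact hx hm
    have hcv : chaseVar hσ x = chaseVar hσ y := by
      rw [chase_step hσ hne, hnx]
    simp only [resolve, hcv]
  | app f ts =>
    have hnx : nx σ x = x := by simp [nx, hm]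
    have hcv : chaseVar hσ x = x := chase_fixed hσ hnx
    simp only [resolve, hcv, if_pos hx, hm]

lemma resolve_var_nodom {σ : Subst Sg} (hσ : σ.InRSF) {t : HTerm Sg} {y : ℕ}
    (h : resolve hσ t = .var y) : y ∉ σ.dom := by
  cases t with
  | app f ts => rw [resolve_app] at h; cases h
  | var x =>
    by_cases hc : chaseVar hσ x ∈ σ.dom
    · exfalso
      simp only [resolve, if_pos hc] at h
      have hterm := chase_terminal hσ x
      have : nx σ (chaseVar hσ x) = y := by simp [nx, h]
      rw [hterm] at this
      rw [this] at h hc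
      exact hc h
    · simp only [resolve, if_neg hc] at h
      injection h with h
      rw [← h]; exact hc

noncomputable def go {σ : Subst Sg} (hσ : σ.InRSF) (v : ℕ → Tree Sg)
    (p : List ℕ) (t : HTerm Sg) : Option (Sg.Sym ⊕ ℕ) :=
  match resolve hσ t, p with
  | .var y, _ => v y p
  | .app f _, [] => some (Sum.inl f)
  | .app f ts, i :: p' => if h : i < Sg.arity f then go hσ v p' (ts ⟨i, h⟩) else none
  termination_by p.length
  decreasing_by simp_wf

lemma go_var {σ : Subst Sg} (hσ : σ.InRSF) (v : ℕ → Tree Sg) {t : HTerm Sg} {y : ℕ}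
    (h : resolve hσ t = .var y) (p : List ℕ) : go hσ v p t = v y p := by
  rw [go.eq_def, h]

lemma go_app_nil {σ : Subst Sg} (hσ : σ.InRSF) (v : ℕ → Tree Sg) {t : HTerm Sg}
    {f : Sg.Sym} {ts} (h : resolve hσ t = .app f ts) :
    go hσ v [] t = some (Sum.inl f) := by
  rw [go.eq_def, h]

lemma go_app_cons {σ : Subst Sg} (hσ : σ.InRSF) (v : ℕ → Tree Sg) {t : HTerm Sg}
    {f : Sg.Sym} {ts} (h : resolve hσ t = .app f ts) (i : ℕ) (p' : List ℕ) :
    go hσ v (i :: p') t =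
      if hh : i < Sg.arity f then go hσ v p' (ts ⟨i, hh⟩) else none := by
  rw [go.eq_def, h]

end Stmt19
namespace Stmt19

open HTerm

variable {Sg : Signature}

/-- the canonical solution of σ with off-domain values v -/
noncomputable def sol {σ : Subst Sg} (hσ : σ.InRSF) (v : ℕ → Tree Sg) : ℕ → Tree Sg :=
  fun x p => go hσ v p (.var x)

lemma eval_go {σ : Subst Sg} (hσ : σ.InRSF) (v : ℕ → Tree Sg) (t : HTerm Sg) :
    HTerm.eval (strucT Sg) (sol hσ v) t = fun p => go hσ v p t := by
  induction t with
  | var x => rfl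
  | app f ts ih =>
    funext p
    show interpT f (fun i => HTerm.eval (strucT Sg) (sol hσ v) (ts i)) p = _
    cases p with
    | nil =>
      rw [go_app_nil hσ v (resolve_app hσ f ts)]
      rfl
    | cons i p' =>
      rw [go_app_cons hσ v (resolve_app hσ f ts)]
      show (if h : i < Sg.arity f
        then HTerm.eval (strucT Sg) (sol hσ v) (ts ⟨i, h⟩) p' else none) = _
      by_cases h : i < Sg.arity f
      · rw [dif_pos h, dif_pos h, ih]
      · rw [dif_neg h, dif_neg h]

lemma sol_agrees {σ : Subst Sg} (hσ : σ.InRSF) (v : ℕ → Tree Sg) {x : ℕ}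
    (hx : x ∉ σ.dom) : sol hσ v x = v x := by
  funext p
  have hres : resolve hσ (.var x : HTerm Sg) = .var x := by
    simp only [resolve]
    rw [chase_nodom hσ hx]
    rw [if_neg hx]
  exact go_var hσ v hres p

lemma sol_sat {σ : Subst Sg} (hσ : σ.InRSF) (v : ℕ → Tree Sg) :
    (strucT Sg).Sat (sol hσ v) σ.eqs := by
  rintro e ⟨x, hx, rfl⟩
  show HTerm.eval (strucT Sg) (sol hσ v) (.var x) = HTerm.eval (strucT Sg) (sol hσ v) (σ.map x)
  rw [eval_go, eval_go]
  funext p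
  show go hσ v p (.var x) = go hσ v p (σ.map x)
  have hres := resolve_var_dom hσ hx
  cases hr : resolve hσ (σ.map x) with
  | var y =>
    rw [go_var hσ v (hres.trans hr), go_var hσ v hr]
  | app f ts =>
    cases p with
    | nil => rw [go_app_nil hσ v (hres.trans hr), go_app_nil hσ v hr]
    | cons i p' => rw [go_app_cons hσ v (hres.trans hr), go_app_cons hσ v hr]

lemma sat_dom_eq {σ : Subst Sg} {w : ℕ → Tree Sg}
    (hsat : (strucT Sg).Sat w σ.eqs) {x : ℕ} (hx : x ∈ σ.dom) :
    w x = HTerm.eval (strucT Sg) w (σ.map x) :=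
  hsat (HTerm.var x, σ.map x) ⟨x, hx, rfl⟩

lemma sat_nx {σ : Subst Sg} {w : ℕ → Tree Sg}
    (hsat : (strucT Sg).Sat w σ.eqs) (x : ℕ) : w x = w (nx σ x) := by
  by_cases h : nx σ x = x
  · rw [h]
  · obtain ⟨hdom, hmap⟩ := nx_spec h
    have := sat_dom_eq hsat hdom
    rw [hmap] at this
    exact this

lemma sat_chase {σ : Subst Sg} (hσ : σ.InRSF) {w : ℕ → Tree Sg}
    (hsat : (strucT Sg).Sat w σ.eqs) (x : ℕ) : w x = w (chaseVar hσ x) := by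
  have : ∀ k x, w x = w (ziF σ x k) := by
    intro k
    induction k with
    | zero => intro x; rfl
    | succ k ih =>
      intro x
      rw [ih x, ziF_succ]
      exact sat_nx hsat _
  exact this _ x

lemma sat_resolve {σ : Subst Sg} (hσ : σ.InRSF) {w : ℕ → Tree Sg}
    (hsat : (strucT Sg).Sat w σ.eqs) (t : HTerm Sg) :
    HTerm.eval (strucT Sg) w t = HTerm.eval (strucT Sg) w (resolve hσ t) := by
  cases t with
  | app f ts => rw [resolve_app]
  | var x =>
    show w x = _
    rw [sat_chase hσ hsat x]
    by_cases hc : chaseVar hσ x ∈ σ.dom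
    · simp only [resolve, if_pos hc]
      exact sat_dom_eq hsat hc
    · simp only [resolve, if_neg hc]
      rfl

lemma sol_unique {σ : Subst Sg} (hσ : σ.InRSF) (v : ℕ → Tree Sg) {w : ℕ → Tree Sg}
    (hoff : ∀ x ∉ σ.dom, w x = v x) (hsat : (strucT Sg).Sat w σ.eqs) :
    ∀ (p : List ℕ) (t : HTerm Sg), HTerm.eval (strucT Sg) w t p = go hσ v p t := by
  suffices h : ∀ (n : ℕ) (p : List ℕ), p.length = n → ∀ t : HTerm Sg,
      HTerm.eval (strucT Sg) w t p = go hσ v p t by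
    intro p t; exact h p.length p rfl t
  intro n
  induction n using Nat.strong_induction_on with
  | _ n ih =>
    intro p hp t
    rw [sat_resolve hσ hsat t]
    cases hres : resolve hσ t with
    | var y =>
      rw [go_var hσ v hres]
      show w y p = v y p
      rw [hoff y (resolve_var_nodom hσ hres)]
    | app f ts =>
      cases p with
      | nil =>
        rw [go_app_nil hσ v hres]
        rfl
      | cons i p' =>
        rw [go_app_cons hσ v hres]
        show (if h : i < Sg.arity f
          then HTerm.eval (strucT Sg) w (ts ⟨i, h⟩) p' else none) = _
        by_cases h : i < Sg.arity f
        · rw [dif_pos h, dif_pos h]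
          exact ih p'.length (by rw [← hp]; simp) p' rfl _
        · rw [dif_neg h, dif_neg h]

/-- the model of (possibly ill-formed) infinite trees -/
noncomputable def modelT (Sg : Signature) : RTModel Sg where
  struc := strucT Sg
  inj := by
    intro f a b h
    funext i p
    have h2 : interpT f a ((i : ℕ) :: p) = interpT f b ((i : ℕ) :: p) :=
      congrFun h ((i : ℕ) :: p)
    simp only [interpT, i.isLt, dif_pos, Fin.eta] at h2
    exact h2
  distinct := by
    intro f g a b hfg h
    have := congrFun h []
    change some (Sum.inl f) = some (Sum.inl g) at this
    injection this with this
    injection this with this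
    exact hfg this
  uniqueness := by
    intro σ hσ v
    refine ⟨sol hσ v, ⟨fun x hx => sol_agrees hσ v hx, sol_sat hσ v⟩, ?_⟩
    rintro w ⟨hoff, hsat⟩
    funext x p
    show w x p = go hσ v p (.var x)
    have := sol_unique hσ v hoff hsat p (.var x)
    exact this

end Stmt19
namespace Stmt19

open HTerm

variable {Sg : Signature}

/-- finiteness of a tree -/
def FinT (u : Tree Sg) : Prop := {p | (u p).isSome}.Finite

lemma finT_interp {f : Sg.Sym} {a : Fin (Sg.arity f) → Tree Sg}
    (h : ∀ i, FinT (a i)) : FinT (interpT f a) := by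
  have hsub : {p | ((interpT f a) p).isSome} ⊆
      insert [] (⋃ i : Fin (Sg.arity f),
        (fun p => (i : ℕ) :: p) '' {p | (a i p).isSome}) := by
    intro p hp
    cases p with
    | nil => exact Set.mem_insert _ _
    | cons i p' =>
      simp only [Set.mem_setOf_eq, interpT] at hp
      by_cases hi : i < Sg.arity f
      · rw [dif_pos hi] at hp
        refine Set.mem_insert_of_mem _ ?_
        exact Set.mem_iUnion.mpr ⟨⟨i, hi⟩, ⟨p', hp, rfl⟩⟩
      · rw [dif_neg hi] at hp
        simp at hp
  exact Set.Finite.subset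
    ((Set.finite_iUnion (fun i => (h i).image _)).insert []) hsub

lemma fin_eval {w : ℕ → Tree Sg} (t : HTerm Sg)
    (h : ∀ y ∈ t.varsIn, FinT (w y)) : FinT (HTerm.eval (strucT Sg) w t) := by
  induction t with
  | var x => exact h x rfl
  | app f ts ih =>
    refine finT_interp (fun i => ih i (fun y hy => h y ?_))
    exact Set.mem_iUnion.mpr ⟨i, hy⟩

lemma varsIn_finite (t : HTerm Sg) : t.varsIn.Finite := by
  induction t with
  | var x => exact Set.finite_singleton x
  | app f ts ih => exact Set.finite_iUnion ih

lemma hvarsN_mono {σ : Subst Sg} {n m : ℕ} (h : n ≤ m) :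
    σ.hvarsN n ⊆ σ.hvarsN m := by
  induction m with
  | zero => have : n = 0 := by omega
            rw [this]
  | succ m ih =>
    rcases Nat.lt_or_ge n (m + 1) with h' | h'
    · exact (ih (by omega)).trans Set.subset_union_left
    · have : n = m + 1 := by omega
      rw [this]

lemma hvars_bound {σ : Subst Sg} {V : Set ℕ} (hfin : V.Finite)
    (h : V ⊆ σ.hvars) : ∃ N, V ⊆ σ.hvarsN N := by
  classical
  have hex : ∀ y ∈ V, ∃ n, y ∈ σ.hvarsN n := fun y hy => Set.mem_iUnion.mp (h hy)
  choose! f hf using hex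
  refine ⟨hfin.toFinset.sup f, fun y hy => ?_⟩
  exact hvarsN_mono (Finset.le_sup (hfin.mem_toFinset.mpr hy)) (hf y hy)

/-- variables in hvars have finite solutions -/
lemma hvars_fin {σ : Subst Sg} {w : ℕ → Tree Sg}
    (hsat : (strucT Sg).Sat w σ.eqs) (hoff : ∀ x ∉ σ.dom, FinT (w x)) :
    ∀ x ∈ σ.hvars, FinT (w x) := by
  have key : ∀ n, ∀ x ∈ σ.hvarsN n, FinT (w x) := by
    intro n
    induction n with
    | zero => exact fun x hx => hoff x hx
    | succ n ih =>
      intro x hx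
      rcases hx with hx | ⟨hdom, hvars⟩
      · exact ih x hx
      · rw [sat_dom_eq hsat hdom]
        exact fin_eval _ (fun y hy => ih y (hvars hy))
  intro x hx
  obtain ⟨n, hn⟩ := Set.mem_iUnion.mp hx
  exact key n x hn

lemma step_notin (σ : Subst Sg) (x : ℕ) (h : x ∉ σ.hvars) :
    x ∈ σ.dom ∧ ∃ y, y ∈ (σ.map x).varsIn ∧ y ∉ σ.hvars := by
  have hdom : x ∈ σ.dom := by
    by_contra hc
    exact h (Set.mem_iUnion.mpr ⟨0, hc⟩)
  refine ⟨hdom, ?_⟩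
  by_contra hc
  push_neg at hc
  have hsub : (σ.map x).varsIn ⊆ σ.hvars := fun y hy => hc y hy
  obtain ⟨N, hN⟩ := hvars_bound (varsIn_finite _) hsub
  exact h (Set.mem_iUnion.mpr ⟨N + 1, Or.inr ⟨hdom, hN⟩⟩)

end Stmt19
namespace Stmt19

open HTerm

variable {Sg : Signature}

lemma eval_sub {w : ℕ → Tree Sg} (t : HTerm Sg) {y : ℕ} (hy : y ∈ t.varsIn) :
    ∃ q : List ℕ, (∀ p, HTerm.eval (strucT Sg) w t (q ++ p) = w y p) ∧
      (∀ f ts, t = .app f ts → q ≠ []) := by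
  induction t with
  | var x =>
    have hxy : y = x := hy
    subst hxy
    exact ⟨[], fun p => rfl, fun f ts h => by cases h⟩
  | app f ts ih =>
    obtain ⟨i, hi⟩ := Set.mem_iUnion.mp hy
    obtain ⟨q, hq, -⟩ := ih i hi
    refine ⟨(i : ℕ) :: q, ?_, fun _ _ _ => by simp⟩
    intro p
    show interpT f (fun j => HTerm.eval (strucT Sg) w (ts j)) ((i : ℕ) :: (q ++ p)) = w y p
    simp only [interpT, i.isLt, dif_pos, Fin.eta]
    exact hq p

/-- variables not in hvars have infinite solutions -/
lemma hvars_infinite {τ : Subst Sg} (hτ : τ.InRSF) {w : ℕ → Tree Sg}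
    (hsat : (strucT Sg).Sat w τ.eqs) {x : ℕ} (hx : x ∉ τ.hvars) :
    ¬ FinT (w x) := by
  classical
  set stepF : ℕ → ℕ := fun y =>
    if h : y ∉ τ.hvars then (step_notin τ y h).2.choose else y with hstepF
  have hstep : ∀ y, y ∉ τ.hvars → stepF y ∈ (τ.map y).varsIn ∧ stepF y ∉ τ.hvars := by
    intro y hy
    rw [hstepF]
    simp only [dif_pos hy]
    exact ⟨(step_notin τ y hy).2.choose_spec.1, (step_notin τ y hy).2.choose_spec.2⟩
  set z : ℕ → ℕ := fun n => stepF^[n] x with hz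
  have hzsucc : ∀ n, z (n + 1) = stepF (z n) := by
    intro n; rw [hz]; exact Function.iterate_succ_apply' _ _ _
  have hznot : ∀ n, z n ∉ τ.hvars := by
    intro n; induction n with
    | zero => exact hx
    | succ n ih => rw [hzsucc]; exact (hstep _ ih).2
  have hzdom : ∀ n, z n ∈ τ.dom := fun n => (step_notin τ _ (hznot n)).1
  have hzvars : ∀ n, z (n + 1) ∈ (τ.map (z n)).varsIn := by
    intro n; rw [hzsucc]; exact (hstep _ (hznot n)).1
  -- pigeonhole
  obtain ⟨i, -, j, -, hne, hij⟩ :=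
    Set.infinite_univ.exists_ne_map_eq_of_mapsTo
      (f := fun k => z k) (fun k _ => hzdom k) τ.finite
  wlog hlt : i < j generalizing i j
  · exact this j i hne.symm hij.symm (by omega)
  set d := j - i with hd'
  have hd : 0 < d := by omega
  have hper : ∀ m, i ≤ m → z (m + d) = z m := by
    intro m hm
    have e1 : m + d = (m - i) + (i + d) := by omega
    have e2 : i + d = j := by omega
    have e3 : m = (m - i) + i := by omega
    rw [hz]
    show stepF^[m + d] x = stepF^[m] x
    rw [e1, Function.iterate_add_apply]
    rw [show stepF^[i + d] x = z (i + d) from rfl, e2, ← hij]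
    rw [show z i = stepF^[i] x from rfl, ← Function.iterate_add_apply, ← e3]
  -- embeddings
  have hemb : ∀ n, ∃ q : List ℕ, (∀ p, w (z n) (q ++ p) = w (z (n + 1)) p) ∧
      ((∃ f ts, τ.map (z n) = .app f ts) → q ≠ []) := by
    intro n
    obtain ⟨q, hq, hq2⟩ := eval_sub (w := w) (τ.map (z n)) (hzvars n)
    refine ⟨q, fun p => ?_, fun ⟨f, ts, hft⟩ => hq2 f ts hft⟩
    rw [sat_dom_eq hsat (hzdom n)]
    exact hq p
  choose q hq hq2 using hemb
  have chain : ∀ (k a : ℕ), ∃ R : List ℕ, ∀ p, w (z a) (R ++ p) = w (z (a + k)) p := by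
    intro k
    induction k with
    | zero => exact fun a => ⟨[], fun p => rfl⟩
    | succ k ihk =>
      intro a
      obtain ⟨R, hR⟩ := ihk (a + 1)
      refine ⟨q a ++ R, fun p => ?_⟩
      rw [List.append_assoc, hq a (R ++ p), hR p]
      have e : a + 1 + k = a + (k + 1) := by omega
      rw [e]
  by_cases hc : ∃ m, i ≤ m ∧ m < i + d ∧ ∃ f ts, τ.map (z m) = .app f ts
  · -- some binding along the cycle is a non-variable: pumping
    obtain ⟨m₀, hm1, hm2, f, ts, hfts⟩ := hc
    have hroot : (w (z m₀)) [] = some (Sum.inl f) := by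
      rw [sat_dom_eq hsat (hzdom m₀), hfts]
      rfl
    obtain ⟨R', hR'⟩ := chain (d - 1) (m₀ + 1)
    set Q := q m₀ ++ R' with hQ'
    have hQne : Q ≠ [] := by
      intro hQnil
      exact hq2 m₀ ⟨f, ts, hfts⟩ (List.append_eq_nil_iff.mp hQnil).1
    have hself : ∀ p, w (z m₀) (Q ++ p) = w (z m₀) p := by
      intro p
      rw [hQ', List.append_assoc, hq m₀, hR']
      have e : m₀ + 1 + (d - 1) = m₀ + d := by omega
      rw [e, hper m₀ hm1]
    have hpump : ∀ n, ∃ L : List ℕ, L.length = n * Q.length ∧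
        w (z m₀) L = w (z m₀) [] := by
      intro n; induction n with
      | zero => exact ⟨[], by simp, rfl⟩
      | succ n ihn =>
        obtain ⟨L, hL1, hL2⟩ := ihn
        refine ⟨Q ++ L, ?_, ?_⟩
        · simp only [List.length_append, hL1]; ring
        · rw [hself L, hL2]
    choose L hL1 hL2 using hpump
    obtain ⟨R, hR⟩ := chain m₀ 0
    have e0 : 0 + m₀ = m₀ := by omega
    rw [e0] at hR
    have hmem : ∀ n, R ++ L n ∈ {p : List ℕ | ((w x) p).isSome} := by
      intro n
      have : w x (R ++ L n) = w (z m₀) (L n) := hR (L n)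
      simp only [Set.mem_setOf_eq, this, hL2 n, hroot, Option.isSome_some]
    have hinj : Function.Injective (fun n => R ++ L n) := by
      intro n m hnm
      have := congrArg List.length hnm
      simp only [List.length_append, hL1] at this
      have hQpos : 0 < Q.length := List.length_pos_iff.mpr hQne
      exact Nat.eq_of_mul_eq_mul_right hQpos (by omega)
    exact (Set.infinite_of_injective_forall_mem hinj hmem)
  · -- all bindings along the cycle are variable renamings: contradiction with RSF
    exfalso
    push_neg at hc
    have hren : ∀ m, i ≤ m → m < i + d → τ.map (z m) = .var (z (m + 1)) := by
      intro m h1 h2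
      cases hm : τ.map (z m) with
      | var y =>
        have hv : z (m + 1) ∈ (HTerm.var y : HTerm Sg).varsIn := hm ▸ hzvars m
        have : z (m + 1) = y := hv
        rw [← this]
      | app f ts => exact absurd hm (hc m h1 h2 f ts)
    have hnx : ∀ m, i ≤ m → m < i + d → nx τ (z m) = z (m + 1) := by
      intro m h1 h2
      simp [nx, hren m h1 h2]
    have hcyc : ziF τ (z i) d = z i := by
      have key : ∀ k, k ≤ d → ziF τ (z i) k = z (i + k) := by
        intro k
        induction k with
        | zero => intro _; rfl
        | succ k ihk =>
          intro hk
          rw [ziF_succ, ihk (by omega), hnx (i + k) (by omega) (by omega)]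
          congr 1
      rw [key d le_rfl, hper i le_rfl]
    have hfix := no_nx_cycle hτ (z i) hd hcyc
    have h1 := hren i le_rfl (by omega)
    have h2 := hnx i le_rfl (by omega)
    have h3 : τ.map (z i) = .var (z i) := by rw [h1, ← h2, hfix]
    exact (hzdom i) h3

end Stmt19
namespace Stmt19

open HTerm

variable {Sg : Signature}

lemma hvars_incl {σ τ : Subst Sg} (hσ : σ.InRSF) (hτ : τ.InRSF)
    (hconst : ∃ f, Sg.arity f = 0) (W : Set ℕ)
    (heq : RTExistsEquiv W σ.eqs τ.eqs) : σ.hvars \ W ⊆ τ.hvars \ W := by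
  rintro x ⟨hxh, hxW⟩
  obtain ⟨f0, hf0⟩ := hconst
  set cT : Tree Sg :=
    interpT f0 (fun i => (Fin.cast hf0 i).elim0) with hcT
  have hcfin : FinT cT := by
    refine Set.Finite.subset (Set.finite_singleton ([] : List ℕ)) ?_
    intro p hp
    cases p with
    | nil => rfl
    | cons a p' =>
      exfalso
      simp only [Set.mem_setOf_eq, hcT, interpT] at hp
      rw [dif_neg (by omega)] at hp
      simp at hp
  obtain ⟨w, ⟨hwoff, hwsat⟩, -⟩ := (modelT Sg).uniqueness σ hσ (fun _ => cT)
  have hwsat2 : (strucT Sg).Sat w σ.eqs := hwsat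
  have hwfin : ∀ y ∈ σ.hvars, FinT (w y) :=
    hvars_fin hwsat2 (fun y hy => by rw [hwoff y hy]; exact hcfin)
  obtain ⟨w', hag, hwsat'⟩ := (heq (modelT Sg) w).mp ⟨w, fun _ _ => rfl, hwsat⟩
  have hwsat2' : (strucT Sg).Sat w' τ.eqs := hwsat'
  have hx' : FinT (w' x) := by
    rw [hag x hxW]
    exact hwfin x hxh
  refine ⟨?_, hxW⟩
  by_contra hxt
  exact hvars_infinite hτ hwsat2' hxt hx'

end Stmt19
/-- If `σ, τ ∈ RSubst` and `RT ⊢ ∀(∃W.σ ↔ ∃W.τ)`, then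
`hvars(σ) ∖ W = hvars(τ) ∖ W`. -/
theorem project_hvars_invariant
    (Sg : Signature) (hconst : ∃ f, Sg.arity f = 0) (hposar : ∃ f, 0 < Sg.arity f)
    (σ τ : Subst Sg) (hσ : σ.InRSF) (hτ : τ.InRSF)
    (W : Set ℕ) (heq : RTExistsEquiv W σ.eqs τ.eqs) :
    σ.hvars \ W = τ.hvars \ W := by
  apply Set.Subset.antisymm
  · exact Stmt19.hvars_incl hσ hτ hconst W heq
  · exact Stmt19.hvars_incl hτ hσ hconst W (fun A v => (heq A v).symm)
end
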